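/- arXiv:1109.3616 — 13 statements merged into one kernel-verified Lean document; each statement's English description precedes it below -/
import Mathlib

section
/- Let p be a prime and s a positive integer, and let 0 ≤ a_1 < a_2 < ... < a_r ≤ s-1 be integers with r ≥ 2. Suppose a_{u+1} - a_u ≥ 4 for some 1 ≤ u ≤ r-1. Let a' be the (r+1)-tuple obtained from a by inserting the value a_u + 2 between a_u and a_{u+1}. Then h_{p,r+1}(a') - h_{p,r}(a) = Σ_{k=1}^{u} p^{-(a_u - a_k + 2)} + Σ_{i=u+1}^{r} p^{-(a_i - a_u - 2)} < 1/(p-1). -/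
lemma gap_lemma {r : ℕ} (a : ℕ → ℤ) (hmono : ∀ i j, 1 ≤ i → i < j → j ≤ r → a i < a j) :
    ∀ i j, 1 ≤ i → i ≤ j → j ≤ r → (j : ℤ) - i ≤ a j - a i := by
  intro i j hi hij hjr
  induction j, hij using Nat.le_induction with
  | base => simp
  | succ n hn ih =>
    have h1 : a n < a (n + 1) := hmono n (n + 1) (le_trans hi hn) (by omega) hjr
    have h2 := ih (by omega)
    push_cast at h2 ⊢
    omega

lemma geom_aux (q : ℝ) (hq : 2 ≤ q) (n : ℕ) :
    ∑ j ∈ Finset.range n, q ^ (-(j : ℤ) - 2) < 1 / (q * (q - 1)) := by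
  have hq0 : (0:ℝ) < q := by linarith
  set x : ℝ := 1 / q with hxdef
  have hx : (0:ℝ) < x := by positivity
  have hx1 : x < 1 := by rw [hxdef, div_lt_one hq0]; linarith
  have h1 : ∀ j : ℕ, q ^ (-(j : ℤ) - 2) = x ^ 2 * x ^ j := by
    intro j
    rw [show -(j:ℤ) - 2 = -(((j + 2 : ℕ)) : ℤ) by push_cast; ring, zpow_neg, zpow_natCast,
      pow_add]
    rw [hxdef]
    field_simp
    rw [← mul_pow, mul_one_div_cancel (ne_of_gt hq0), one_pow]
  simp only [h1, ← Finset.mul_sum]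
  have hsum : ∑ j ∈ Finset.range n, x ^ j < 1 / (1 - x) := by
    rw [geom_sum_eq (ne_of_lt hx1), show (x ^ n - 1) / (x - 1) = (1 - x ^ n) / (1 - x) by
      rw [← neg_div_neg_eq]; ring_nf]
    gcongr
    · linarith [pow_pos hx n]
  have hkey : x ^ 2 * (1 / (1 - x)) = 1 / (q * (q - 1)) := by
    rw [hxdef]
    have hq1 : q ≠ 0 := by linarith
    have : (1:ℝ) - 1/q = (q - 1)/q := by field_simp
    rw [this]
    field_simp
  calc x ^ 2 * ∑ j ∈ Finset.range n, x ^ j < x ^ 2 * (1 / (1 - x)) :=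
        mul_lt_mul_of_pos_left hsum (by positivity)
    _ = 1 / (q * (q - 1)) := hkey

lemma Icc1 (n : ℕ) : Finset.Icc 1 n = Finset.Ioc 0 n := by
  ext x; simp only [Finset.mem_Icc, Finset.mem_Ioc]; omega

lemma Icc_one (m n : ℕ) : Finset.Icc (m + 1) n = Finset.Ioc m n := by
  ext x; simp only [Finset.mem_Icc, Finset.mem_Ioc]; omega

lemma sum_Ioc_zero (n : ℕ) (f : ℕ → ℝ) :
    ∑ k ∈ Finset.Ioc 0 n, f k = ∑ j ∈ Finset.range n, f (j + 1) := by
  rw [show Finset.Ioc 0 n = Finset.Ico 1 (n + 1) by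
        ext x; simp only [Finset.mem_Ioc, Finset.mem_Ico]; omega,
      Finset.sum_Ico_eq_sum_range]
  simp [add_comm]

/-- `h_{p,r}(a) = Σ_{k=1}^{r-1} Σ_{i=k+1}^{r} 1/p^(a_i - a_k)` (1-based indexing). -/
noncomputable def hpr (p : ℝ) (r : ℕ) (a : ℕ → ℤ) : ℝ :=
  ∑ k ∈ Finset.Icc 1 (r - 1), ∑ i ∈ Finset.Icc (k + 1) r, p ^ (a k - a i)

theorem stmt_1 (p s r u : ℕ) (hp : p.Prime) (hr : 2 ≤ r)
    (hu1 : 1 ≤ u) (hur : u ≤ r - 1)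
    (a : ℕ → ℤ) (h0 : 0 ≤ a 1)
    (hmono : ∀ i j, 1 ≤ i → i < j → j ≤ r → a i < a j)
    (hub : a r ≤ (s : ℤ) - 1)
    (hgap : 4 ≤ a (u + 1) - a u)
    (a' : ℕ → ℤ)
    (ha' : ∀ j, a' j = if j ≤ u then a j else if j = u + 1 then a u + 2 else a (j - 1)) :
    hpr p (r + 1) a' - hpr p r a =
      (∑ k ∈ Finset.Icc 1 u, (p : ℝ) ^ (-(a u - a k + 2))) +
        (∑ i ∈ Finset.Icc (u + 1) r, (p : ℝ) ^ (-(a i - a u - 2))) ∧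
    hpr p (r + 1) a' - hpr p r a < 1 / ((p : ℝ) - 1) := by
  have hur' : u + 1 ≤ r := by omega
  have hA : ∀ j, j ≤ u → a' j = a j := fun j hj => by rw [ha' j, if_pos hj]
  have hB : a' (u + 1) = a u + 2 := by rw [ha', if_neg (by omega), if_pos rfl]
  have hC : ∀ j, u + 1 < j → a' j = a (j - 1) := fun j hj => by
    rw [ha' j, if_neg (by omega), if_neg (by omega)]
  -- the key equality
  have key : hpr p (r + 1) a' = hpr p r a
      + (∑ k ∈ Finset.Ioc 0 u, (p : ℝ) ^ (a k - a u - 2))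
      + (∑ i ∈ Finset.Ioc u r, (p : ℝ) ^ (a u + 2 - a i)) := by
    unfold hpr
    simp only [Nat.add_sub_cancel, Icc_one, Icc1]
    rw [← Finset.sum_Ioc_consecutive _ (Nat.zero_le u) (show u ≤ r by omega),
        ← Finset.sum_Ioc_consecutive _ (Nat.le_succ u) hur',
        Nat.Ioc_succ_singleton, Finset.sum_singleton]
    have partA : ∑ k ∈ Finset.Ioc 0 u, ∑ i ∈ Finset.Ioc k (r + 1), (p : ℝ) ^ (a' k - a' i)
        = (∑ k ∈ Finset.Ioc 0 u, ∑ i ∈ Finset.Ioc k r, (p : ℝ) ^ (a k - a i))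
          + ∑ k ∈ Finset.Ioc 0 u, (p : ℝ) ^ (a k - a u - 2) := by
      rw [← Finset.sum_add_distrib]
      apply Finset.sum_congr rfl
      intro k hk
      simp only [Finset.mem_Ioc] at hk
      rw [← Finset.sum_Ioc_consecutive _ (show k ≤ u + 1 by omega) (show u + 1 ≤ r + 1 by omega),
          ← Finset.sum_Ioc_consecutive _ (show k ≤ u by omega) (Nat.le_succ u),
          Nat.Ioc_succ_singleton, Finset.sum_singleton]
      have hre : ∑ i ∈ Finset.Ioc (u + 1) (r + 1), (p : ℝ) ^ (a' k - a' i)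
          = ∑ i ∈ Finset.Ioc u r, (p : ℝ) ^ (a' k - a i) := by
        rw [← Finset.map_add_right_Ioc u r 1, Finset.sum_map]
        apply Finset.sum_congr rfl
        intro i hi
        simp only [Finset.mem_Ioc] at hi
        simp only [addRightEmbedding_apply]
        rw [hC (i + 1) (by omega)]
        norm_num
      rw [hre, hA k hk.2, hB]
      have h2 : ∑ i ∈ Finset.Ioc k u, (p : ℝ) ^ (a k - a' i)
          = ∑ i ∈ Finset.Ioc k u, (p : ℝ) ^ (a k - a i) := by
        apply Finset.sum_congr rfl
        intro i hi
        simp only [Finset.mem_Ioc] at hi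
        rw [hA i hi.2]
      rw [h2, show a k - (a u + 2) = a k - a u - 2 by ring]
      have h3 := Finset.sum_Ioc_consecutive (fun i => (p : ℝ) ^ (a k - a i))
        (show k ≤ u by omega) (show u ≤ r by omega)
      linarith [h3]
    have partB : ∑ i ∈ Finset.Ioc (u + 1) (r + 1), (p : ℝ) ^ (a' (u + 1) - a' i)
        = ∑ i ∈ Finset.Ioc u r, (p : ℝ) ^ (a u + 2 - a i) := by
      rw [← Finset.map_add_right_Ioc u r 1, Finset.sum_map]
      apply Finset.sum_congr rfl
      intro i hi
      simp only [Finset.mem_Ioc] at hi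
      simp only [addRightEmbedding_apply]
      rw [hB, hC (i + 1) (by omega)]
      norm_num
    have partC : ∑ k ∈ Finset.Ioc (u + 1) r, ∑ i ∈ Finset.Ioc k (r + 1), (p : ℝ) ^ (a' k - a' i)
        = ∑ k ∈ Finset.Ioc u (r - 1), ∑ i ∈ Finset.Ioc k r, (p : ℝ) ^ (a k - a i) := by
      rw [show Finset.Ioc (u + 1) r = Finset.Ioc (u + 1) (r - 1 + 1) by congr 1; omega,
          ← Finset.map_add_right_Ioc u (r - 1) 1, Finset.sum_map]
      apply Finset.sum_congr rfl
      intro k hk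
      simp only [Finset.mem_Ioc] at hk
      simp only [addRightEmbedding_apply]
      rw [← Finset.map_add_right_Ioc k r 1, Finset.sum_map]
      apply Finset.sum_congr rfl
      intro i hi
      simp only [Finset.mem_Ioc] at hi
      simp only [addRightEmbedding_apply]
      rw [hC (k + 1) (by omega), hC (i + 1) (by omega)]
      norm_num
    rw [partA, partB, partC]
    have h4 := Finset.sum_Ioc_consecutive (fun k => ∑ i ∈ Finset.Ioc k r, (p : ℝ) ^ (a k - a i))
      (Nat.zero_le u) (show u ≤ r - 1 by omega)
    linarith [h4]
  have hp2 : (2:ℝ) ≤ (p : ℝ) := by exact_mod_cast hp.two_le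
  have hgapall := gap_lemma a hmono
  -- bound for the first sum
  have hb1 : ∑ k ∈ Finset.Ioc 0 u, (p : ℝ) ^ (a k - a u - 2)
      < 1 / ((p : ℝ) * ((p : ℝ) - 1)) := by
    calc ∑ k ∈ Finset.Ioc 0 u, (p : ℝ) ^ (a k - a u - 2)
        ≤ ∑ k ∈ Finset.Ioc 0 u, (p : ℝ) ^ ((k : ℤ) - u - 2) := by
          apply Finset.sum_le_sum
          intro k hk
          simp only [Finset.mem_Ioc] at hk
          have := hgapall k u hk.1 hk.2 (by omega)
          exact zpow_le_zpow_right₀ (by linarith) (by omega)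
      _ = ∑ j ∈ Finset.range u, (p : ℝ) ^ (-(j : ℤ) - 2) := by
          rw [sum_Ioc_zero, ← Finset.sum_range_reflect]
          apply Finset.sum_congr rfl
          intro j hj
          simp only [Finset.mem_range] at hj
          congr 1
          omega
      _ < 1 / ((p : ℝ) * ((p : ℝ) - 1)) := geom_aux _ hp2 u
  have hb2 : ∑ i ∈ Finset.Ioc u r, (p : ℝ) ^ (a u + 2 - a i)
      < 1 / ((p : ℝ) * ((p : ℝ) - 1)) := by
    calc ∑ i ∈ Finset.Ioc u r, (p : ℝ) ^ (a u + 2 - a i)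
        ≤ ∑ i ∈ Finset.Ioc u r, (p : ℝ) ^ ((u : ℤ) - i - 1) := by
          apply Finset.sum_le_sum
          intro i hi
          simp only [Finset.mem_Ioc] at hi
          have h5 := hgapall (u + 1) i (by omega) (by omega) hi.2
          apply zpow_le_zpow_right₀ (by linarith)
          push_cast at h5 ⊢
          omega
      _ = ∑ j ∈ Finset.range (r - u), (p : ℝ) ^ (-(j : ℤ) - 2) := by
          rw [show Finset.Ioc u r = Finset.Ico (u + 1) (r + 1) by
                ext x; simp only [Finset.mem_Ioc, Finset.mem_Ico]; omega,
              Finset.sum_Ico_eq_sum_range]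
          apply Finset.sum_congr (by congr 1; omega)
          intro j hj
          simp only [Finset.mem_range] at hj
          congr 1
          push_cast
          ring
      _ < 1 / ((p : ℝ) * ((p : ℝ) - 1)) := geom_aux _ hp2 (r - u)
  constructor
  · rw [key, Icc1, Icc_one]
    have e1 : ∑ k ∈ Finset.Ioc 0 u, (p : ℝ) ^ (-(a u - a k + 2))
        = ∑ k ∈ Finset.Ioc 0 u, (p : ℝ) ^ (a k - a u - 2) := by
      apply Finset.sum_congr rfl
      intro k _
      congr 1
      ring
    have e2 : ∑ i ∈ Finset.Ioc u r, (p : ℝ) ^ (-(a i - a u - 2))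
        = ∑ i ∈ Finset.Ioc u r, (p : ℝ) ^ (a u + 2 - a i) := by
      apply Finset.sum_congr rfl
      intro i _
      congr 1
      ring
    rw [e1, e2]
    ring
  · rw [key]
    have hfin : 2 / ((p : ℝ) * ((p : ℝ) - 1)) ≤ 1 / ((p : ℝ) - 1) := by
      rw [div_le_div_iff₀ (by nlinarith) (by nlinarith)]
      nlinarith
    have : (1:ℝ) / ((p : ℝ) * ((p : ℝ) - 1)) + 1 / ((p : ℝ) * ((p : ℝ) - 1))
        = 2 / ((p : ℝ) * ((p : ℝ) - 1)) := by ring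
    linarith
end

section
/- Let p be a prime and let 0 ≤ a_1 < ... < a_r ≤ s-1 be integers with r ≥ 2 such that a_{j+1} - a_j ≥ 2 for all 1 ≤ j ≤ r-1 and a_{u+1} - a_u = 3 for some u. Let a' be the (r+1)-tuple obtained from a by inserting a_u + 2 between a_u and a_{u+1}. Then h_{p,r+1}(a') - h_{p,r}(a) < 1/(p-1). -/
theorem stmt_2 (p s r u : ℕ) (hp : p.Prime) (hr : 2 ≤ r)
    (hu1 : 1 ≤ u) (hur : u ≤ r - 1)
    (a : ℕ → ℤ) (h0 : 0 ≤ a 1)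
    (hmono : ∀ i j, 1 ≤ i → i < j → j ≤ r → a i < a j)
    (hub : a r ≤ (s : ℤ) - 1)
    (hgaps : ∀ j, 1 ≤ j → j ≤ r - 1 → 2 ≤ a (j + 1) - a j)
    (hgap3 : a (u + 1) - a u = 3)
    (a' : ℕ → ℤ)
    (ha' : ∀ j, a' j = if j ≤ u then a j else if j = u + 1 then a u + 2 else a (j - 1)) :
    hpr p (r + 1) a' - hpr p r a < 1 / ((p : ℝ) - 1) := by
  have hP2 : (2:ℝ) ≤ (p:ℝ) := by exact_mod_cast hp.two_le
  set P : ℝ := (p:ℝ) with hPdef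
  have hP1 : (1:ℝ) < P := by linarith
  have hP0 : (0:ℝ) < P := by linarith
  have hPne : P ≠ 0 := ne_of_gt hP0
  obtain ⟨m, rfl⟩ : ∃ m, r = m + 2 := ⟨r - 2, by omega⟩
  have hum : u ≤ m + 1 := by omega
  -- gap lemma
  have hgapd : ∀ i d, 1 ≤ i → i + d ≤ m + 2 → 2*(d:ℤ) ≤ a (i+d) - a i := by
    intro i d
    induction d with
    | zero => intro _ _; simp
    | succ n ih =>
      intro h1 h2
      have h3 := ih h1 (by omega)
      have h4 := hgaps (i+n) (by omega) (by omega)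
      have h5 : i + (n+1) = (i+n)+1 := by omega
      rw [h5]; push_cast; linarith
  have hgap2 : ∀ i j, 1 ≤ i → i ≤ j → j ≤ m + 2 → 2*((j:ℤ)-(i:ℤ)) ≤ a j - a i := by
    intro i j h1 h2 h3
    have h5 := hgapd i (j-i) h1 (by omega)
    have hji : i + (j - i) = j := by omega
    rw [hji] at h5
    have hc : ((j - i : ℕ) : ℤ) = (j:ℤ) - (i:ℤ) := by omega
    rw [hc] at h5; exact h5
  -- a' facts
  have haA : ∀ j, j ≤ u → a' j = a j := by
    intro j hj; rw [ha']; rw [if_pos hj]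
  have haB : a' (u+1) = a u + 2 := by
    rw [ha']; rw [if_neg (by omega), if_pos rfl]
  have haC : ∀ j, u+2 ≤ j → a' j = a (j-1) := by
    intro j hj; rw [ha']; rw [if_neg (by omega), if_neg (by omega)]
  set b : ℤ := a u + 2 with hb
  set S1 : ℝ := ∑ k ∈ Finset.Ioc 0 u, P ^ (a k - b) with hS1
  set S2 : ℝ := ∑ i ∈ Finset.Ioc u (m+2), P ^ (b - a i) with hS2
  -- interval conversions
  have e_icc : ∀ (k n : ℕ), Finset.Icc (k+1) n = Finset.Ioc k n := by
    intro k n; ext x; simp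
  have e_icc1 : ∀ (n : ℕ), Finset.Icc 1 n = Finset.Ioc 0 n := fun n => e_icc 0 n
  have shift : ∀ (c d : ℕ) (F : ℕ → ℝ),
      (∑ i ∈ Finset.Ioc (c+1) (d+1), F i) = ∑ i ∈ Finset.Ioc c d, F (i+1) := by
    intro c d F
    have h1 : Finset.Ioc (c+1) (d+1) = Finset.Ico (c+2) (d+2) := by ext x; simp; omega
    have h2 : Finset.Ioc c d = Finset.Ico (c+1) (d+1) := by ext x; simp
    rw [h1, h2, Finset.sum_Ico_eq_sum_range, Finset.sum_Ico_eq_sum_range]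
    have h3 : d + 2 - (c+2) = d+1 - (c+1) := by omega
    rw [h3]
    apply Finset.sum_congr rfl
    intro j _
    congr 1
    omega
  -- the key identity
  have hT2 : (∑ i ∈ Finset.Ioc (u+1) (m+2+1), P^(a' (u+1) - a' i)) = S2 := by
    rw [shift u (m+2) (fun i => P^(a' (u+1) - a' i))]
    apply Finset.sum_congr rfl
    intro i hi
    simp only [Finset.mem_Ioc] at hi
    rw [haB, haC (i+1) (by omega)]
    have : i + 1 - 1 = i := by omega
    rw [this]
  have hT1 : (∑ k ∈ Finset.Ioc 0 u, ∑ i ∈ Finset.Ioc k (m+2+1), P^(a' k - a' i))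
      = (∑ k ∈ Finset.Ioc 0 u, ∑ i ∈ Finset.Ioc k (m+2), P^(a k - a i)) + S1 := by
    rw [hS1, ← Finset.sum_add_distrib]
    apply Finset.sum_congr rfl
    intro k hk
    simp only [Finset.mem_Ioc] at hk
    rw [← Finset.sum_Ioc_consecutive (fun i => P^(a' k - a' i))
        (show k ≤ u+1 by omega) (show u+1 ≤ m+2+1 by omega),
      ← Finset.sum_Ioc_consecutive (fun i => P^(a' k - a' i))
        (show k ≤ u by omega) (show u ≤ u+1 by omega),
      Nat.Ioc_succ_singleton, Finset.sum_singleton]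
    have hrow1 : (∑ i ∈ Finset.Ioc k u, P^(a' k - a' i)) = ∑ i ∈ Finset.Ioc k u, P^(a k - a i) := by
      apply Finset.sum_congr rfl
      intro i hi
      simp only [Finset.mem_Ioc] at hi
      rw [haA k (by omega), haA i (by omega)]
    have hrow3 : (∑ i ∈ Finset.Ioc (u+1) (m+2+1), P^(a' k - a' i))
        = ∑ i ∈ Finset.Ioc u (m+2), P^(a k - a i) := by
      rw [shift u (m+2) (fun i => P^(a' k - a' i))]
      apply Finset.sum_congr rfl
      intro i hi
      simp only [Finset.mem_Ioc] at hi
      rw [haA k (by omega), haC (i+1) (by omega)]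
      have : i + 1 - 1 = i := by omega
      rw [this]
    rw [hrow1, hrow3, haA k (by omega), haB,
      ← Finset.sum_Ioc_consecutive (fun i => P^(a k - a i))
        (show k ≤ u by omega) (show u ≤ m+2 by omega)]
    ring
  have hT3 : (∑ k ∈ Finset.Ioc (u+1) (m+1+1), ∑ i ∈ Finset.Ioc k (m+2+1), P^(a' k - a' i))
      = ∑ k ∈ Finset.Ioc u (m+1), ∑ i ∈ Finset.Ioc k (m+2), P^(a k - a i) := by
    rw [shift u (m+1) (fun k => ∑ i ∈ Finset.Ioc k (m+2+1), P^(a' k - a' i))]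
    apply Finset.sum_congr rfl
    intro k hk
    simp only [Finset.mem_Ioc] at hk
    rw [shift k (m+2) (fun i => P^(a' (k+1) - a' i))]
    apply Finset.sum_congr rfl
    intro i hi
    simp only [Finset.mem_Ioc] at hi
    rw [haC (k+1) (by omega), haC (i+1) (by omega)]
    have h1 : k + 1 - 1 = k := by omega
    have h2 : i + 1 - 1 = i := by omega
    rw [h1, h2]
  have key : hpr P (m+2+1) a' = hpr P (m+2) a + (S1 + S2) := by
    unfold hpr
    have h31 : m + 2 + 1 - 1 = m + 2 := by omega
    have h21 : m + 2 - 1 = m + 1 := by omega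
    rw [h31, h21]
    simp only [e_icc, e_icc1]
    rw [← Finset.sum_Ioc_consecutive (fun k => ∑ i ∈ Finset.Ioc k (m+2+1), P^(a' k - a' i))
        (show (0:ℕ) ≤ u+1 by omega) (show u+1 ≤ m+2 by omega),
      ← Finset.sum_Ioc_consecutive (fun k => ∑ i ∈ Finset.Ioc k (m+2+1), P^(a' k - a' i))
        (show (0:ℕ) ≤ u by omega) (show u ≤ u+1 by omega),
      Nat.Ioc_succ_singleton, Finset.sum_singleton,
      ← Finset.sum_Ioc_consecutive (fun k => ∑ i ∈ Finset.Ioc k (m+2), P^(a k - a i))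
        (show (0:ℕ) ≤ u by omega) (show u ≤ m+1 by omega)]
    rw [hT1, hT2]
    have h22 : m + 2 = m + 1 + 1 := by omega
    rw [show (Finset.Ioc (u+1) (m+2)) = Finset.Ioc (u+1) (m+1+1) from by rw [← h22]]
    rw [hT3]
    ring
  -- geometric bounds
  set q : ℝ := (P^2)⁻¹ with hq
  have hq0 : 0 < q := by positivity
  have hq1 : q < 1 := by
    rw [hq]
    rw [inv_lt_one_iff₀]
    right
    nlinarith
  have h1q : 0 < 1 - q := by linarith
  have geo : ∀ n:ℕ, (∑ t ∈ Finset.range n, q^t) < (1-q)⁻¹ := by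
    intro n
    rw [geom_sum_eq hq1.ne n]
    have hd : (q^n - 1)/(q-1) = (1 - q^n) * (1-q)⁻¹ := by
      rw [← neg_div_neg_eq, neg_sub, neg_sub, div_eq_mul_inv]
    rw [hd]
    have hqn : 0 < q^n := pow_pos hq0 n
    nlinarith [inv_pos.mpr h1q]
  have hP2q : ∀ n : ℕ, P ^ (-(2 * (n:ℤ))) = q ^ n := by
    intro n
    rw [zpow_neg, show (2*(n:ℤ)) = ((2*n : ℕ):ℤ) by push_cast; ring, zpow_natCast,
      pow_mul, hq, inv_pow]
  have hP2q1 : ∀ n : ℕ, P ^ (-(2 * (n:ℤ)) - 1) = P⁻¹ * q ^ n := by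
    intro n
    rw [zpow_sub₀ hPne, hP2q, zpow_one]
    ring
  -- bound S1
  have hS1b : S1 < q * (1-q)⁻¹ := by
    have e1 : Finset.Ioc 0 u = Finset.Ico 1 (u+1) := by ext x; simp; omega
    rw [hS1, e1, Finset.sum_Ico_eq_sum_range]
    have e2 : u + 1 - 1 = u := by omega
    rw [e2]
    have hle : (∑ j ∈ Finset.range u, P ^ (a (1+j) - b))
        ≤ ∑ j ∈ Finset.range u, q ^ (u - j) := by
      apply Finset.sum_le_sum
      intro j hj
      simp only [Finset.mem_range] at hj
      have hg := hgap2 (1+j) u (by omega) (by omega) (by omega)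
      have hexp : a (1+j) - b ≤ -(2 * (((u - j:ℕ)):ℤ)) := by
        rw [hb]
        push_cast [Nat.cast_sub (le_of_lt hj)] at hg ⊢
        omega
      calc P ^ (a (1+j) - b) ≤ P ^ (-(2 * (((u - j:ℕ)):ℤ))) :=
            zpow_le_zpow_right₀ (le_of_lt hP1) hexp
        _ = q ^ (u - j) := hP2q _
    have hrefl : (∑ j ∈ Finset.range u, q ^ (u - j)) = ∑ t ∈ Finset.range u, q ^ (t+1) := by
      rw [← Finset.sum_range_reflect (fun t => q^(t+1)) u]
      apply Finset.sum_congr rfl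
      intro j hj
      simp only [Finset.mem_range] at hj
      congr 1
      omega
    have hmul : (∑ t ∈ Finset.range u, q ^ (t+1)) = q * ∑ t ∈ Finset.range u, q ^ t := by
      rw [Finset.mul_sum]
      apply Finset.sum_congr rfl
      intro t _
      ring
    calc (∑ j ∈ Finset.range u, P ^ (a (1+j) - b)) ≤ ∑ j ∈ Finset.range u, q ^ (u - j) := hle
      _ = q * ∑ t ∈ Finset.range u, q ^ t := by rw [hrefl, hmul]
      _ < q * (1-q)⁻¹ := by
          exact mul_lt_mul_of_pos_left (geo u) hq0
  -- bound S2
  have hS2b : S2 < P⁻¹ * (1-q)⁻¹ := by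
    have e1 : Finset.Ioc u (m+2) = Finset.Ico (u+1) (m+3) := by ext x; simp; omega
    rw [hS2, e1, Finset.sum_Ico_eq_sum_range]
    have e2 : m + 3 - (u+1) = m + 2 - u := by omega
    rw [e2]
    have hle : (∑ j ∈ Finset.range (m+2-u), P ^ (b - a (u+1+j)))
        ≤ ∑ j ∈ Finset.range (m+2-u), P⁻¹ * q ^ j := by
      apply Finset.sum_le_sum
      intro j hj
      simp only [Finset.mem_range] at hj
      have hg := hgap2 (u+1) (u+1+j) (by omega) (by omega) (by omega)
      have hexp : b - a (u+1+j) ≤ -(2 * (j:ℤ)) - 1 := by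
        rw [hb]
        push_cast at hg ⊢
        omega
      calc P ^ (b - a (u+1+j)) ≤ P ^ (-(2 * (j:ℤ)) - 1) :=
            zpow_le_zpow_right₀ (le_of_lt hP1) hexp
        _ = P⁻¹ * q ^ j := hP2q1 _
    calc (∑ j ∈ Finset.range (m+2-u), P ^ (b - a (u+1+j)))
        ≤ ∑ j ∈ Finset.range (m+2-u), P⁻¹ * q ^ j := hle
      _ = P⁻¹ * ∑ j ∈ Finset.range (m+2-u), q ^ j := by rw [Finset.mul_sum]
      _ < P⁻¹ * (1-q)⁻¹ := mul_lt_mul_of_pos_left (geo _) (by positivity)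
  -- combine
  have hfinal : q * (1-q)⁻¹ + P⁻¹ * (1-q)⁻¹ = 1 / (P - 1) := by
    rw [hq]
    have hP1ne : P - 1 ≠ 0 := by intro h; nlinarith
    have hP21ne : P^2 - 1 ≠ 0 := by intro h; nlinarith
    have h1qne : 1 - (P^2)⁻¹ ≠ 0 := by
      intro h
      have : (P^2)⁻¹ = 1 := by linarith
      have : P^2 = 1 := by
        field_simp at this
        linarith
      nlinarith
    field_simp
    ring
  rw [key]
  have : hpr P (m + 2) a + (S1 + S2) - hpr P (m + 2) a = S1 + S2 := by ring
  rw [this]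
  rw [← hfinal]
  linarith
end

section
/- Let p be a prime and let a = (a_1, ..., a_r) be a strictly increasing integer tuple with 1 ≤ u < v ≤ r-1 such that a_{u+1} - a_u = 1, a_{v+1} - a_v = 3, and a_{j+1} - a_j = 2 for all u < j < v. Let a' be defined by a'_j = a_j for j ≤ u, a'_j = a_j + 1 for u+1 ≤ j ≤ v, and a'_j = a_j for j ≥ v+1. Then h_{p,r}(a) - h_{p,r}(a') > (p-2)/(p^2-1) · p^{a_{u+1} - a_v - 2} · (p^{2(v-u)} - 1); in particular h_{p,r}(a) > h_{p,r}(a') for every prime p ≥ 2. -/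
private lemma stmt3_aux_id (PP A Q : ℝ) (hA : A ≠ 0) (hQ : Q ≠ 0) (hA1 : A - 1 ≠ 0) :
    (PP - 2) * (A⁻¹ * ((Q⁻¹ - 1)/(A⁻¹ - 1))) = (PP - 2)/(A - 1) * Q⁻¹ * (Q - 1) := by
  have h1 : A⁻¹ - 1 = (1 - A)/A := by field_simp
  have h2 : Q⁻¹ - 1 = (1 - Q)/Q := by field_simp
  have h3 : (1:ℝ) - A ≠ 0 := fun h => hA1 (by linarith [sub_eq_zero.mp h])
  rw [h1, h2, div_div_div_eq]
  field_simp
  ring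

set_option maxHeartbeats 1600000 in
theorem stmt_3 (p r u v : ℕ) (hp : p.Prime)
    (hu : 1 ≤ u) (huv : u < v) (hv : v ≤ r - 1)
    (a : ℕ → ℤ)
    (hmono : ∀ i j, 1 ≤ i → i < j → j ≤ r → a i < a j)
    (hdu : a (u + 1) - a u = 1) (hdv : a (v + 1) - a v = 3)
    (hmid : ∀ j, u < j → j < v → a (j + 1) - a j = 2)
    (a' : ℕ → ℤ)
    (ha' : ∀ j, a' j = if u + 1 ≤ j ∧ j ≤ v then a j + 1 else a j) :
    hpr p r a - hpr p r a' >
      (((p : ℝ) - 2) / ((p : ℝ) ^ 2 - 1)) * (p : ℝ) ^ (a (u + 1) - a v - 2) *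
        ((p : ℝ) ^ (2 * ((v : ℤ) - (u : ℤ))) - 1) ∧
    hpr p r a > hpr p r a' := by
  have hp2 : (2:ℝ) ≤ (p:ℝ) := by exact_mod_cast hp.two_le
  set P : ℝ := (p:ℝ) with hPdef
  have hP1 : (1:ℝ) < P := by linarith
  have hP0 : (0:ℝ) < P := by linarith
  have hPne : P ≠ 0 := ne_of_gt hP0
  have hvr : v + 1 ≤ r := by omega
  set n : ℕ := v - u with hn
  have hn1 : 1 ≤ n := by omega
  set x : ℝ := (P^2)⁻¹ with hx
  have hx0 : 0 < x := by positivity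
  have hx1 : x < 1 := by
    rw [hx, inv_lt_one_iff₀]; right; nlinarith
  clear_value P
  have hxz : ∀ t : ℕ, P ^ (-(2*(t:ℤ))) = x ^ t := by
    intro t
    have h1 : (-(2*(t:ℤ))) = -((2*t : ℕ) : ℤ) := by push_cast; ring
    rw [h1, zpow_neg, zpow_natCast, pow_mul, ← inv_pow, ← hx]
  clear_value n x
  -- values of a in the block
  have hblock : ∀ j, u + 1 ≤ j → j ≤ v → a j = a (u+1) + 2*((j:ℤ) - ((u:ℤ)+1)) := by
    intro j hj
    induction j, hj using Nat.le_induction with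
    | base => intro _; push_cast; ring
    | succ m hm ih =>
      intro hmv
      have h2 := hmid m (by omega) (by omega)
      have h3 := ih (by omega)
      push_cast at h3 ⊢
      linarith
  -- growth of a
  have hgrow : ∀ i j, 1 ≤ i → i ≤ j → j ≤ r → (j:ℤ) - (i:ℤ) ≤ a j - a i := by
    intro i j hi hij
    induction j, hij using Nat.le_induction with
    | base => intro _; simp
    | succ m hm ih =>
      intro hmr
      have h1 : a m < a (m+1) := hmono m (m+1) (by omega) (by omega) hmr
      have h3 := ih (by omega)
      push_cast at h3 ⊢
      omega
  have ha'in : ∀ j, u+1 ≤ j → j ≤ v → a' j = a j + 1 := by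
    intro j h1 h2; rw [ha' j]; exact if_pos ⟨h1, h2⟩
  have ha'out : ∀ j, j ≤ u ∨ v+1 ≤ j → a' j = a j := by
    intro j h; rw [ha' j]; apply if_neg; omega
  -- difference as a double sum
  have hD : hpr P r a - hpr P r a'
      = ∑ k ∈ Finset.Icc 1 (r-1), ∑ i ∈ Finset.Icc (k+1) r,
          (P ^ (a k - a i) - P ^ (a' k - a' i)) := by
    unfold hpr
    rw [← Finset.sum_sub_distrib]
    exact Finset.sum_congr rfl fun k _ => (Finset.sum_sub_distrib _ _).symm
  -- inner sum for k ≤ u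
  have hinnerL : ∀ k, 1 ≤ k → k ≤ u →
      ∑ i ∈ Finset.Icc (k+1) r, (P ^ (a k - a i) - P ^ (a' k - a' i))
      = ∑ i ∈ Finset.Icc (u+1) v, (P ^ (a k - a i) - P ^ (a k - a i - 1)) := by
    intro k hk1 hku
    rw [← Finset.sum_subset (Finset.Icc_subset_Icc (by omega) (by omega) :
          Finset.Icc (u+1) v ⊆ Finset.Icc (k+1) r)]
    · apply Finset.sum_congr rfl
      intro i hi
      rw [Finset.mem_Icc] at hi
      rw [ha'out k (Or.inl hku), ha'in i hi.1 hi.2,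
          show a k - (a i + 1) = a k - a i - 1 from by ring]
    · intro i hi hni
      rw [Finset.mem_Icc] at hi hni
      rw [ha'out k (Or.inl hku), ha'out i (by omega), sub_self]
  -- inner sum for u < k ≤ v
  have hinnerM : ∀ k, u+1 ≤ k → k ≤ v →
      ∑ i ∈ Finset.Icc (k+1) r, (P ^ (a k - a i) - P ^ (a' k - a' i))
      = ∑ i ∈ Finset.Icc (v+1) r, (P ^ (a k - a i) - P ^ (a k - a i + 1)) := by
    intro k hk1 hk2
    rw [← Finset.sum_subset (Finset.Icc_subset_Icc (by omega) le_rfl :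
          Finset.Icc (v+1) r ⊆ Finset.Icc (k+1) r)]
    · apply Finset.sum_congr rfl
      intro i hi
      rw [Finset.mem_Icc] at hi
      rw [ha'in k hk1 hk2, ha'out i (Or.inr hi.1),
          show a k + 1 - a i = a k - a i + 1 from by ring]
    · intro i hi hni
      rw [Finset.mem_Icc] at hi hni
      rw [ha'in k hk1 hk2, ha'in i (by omega) (by omega),
          show a k + 1 - (a i + 1) = a k - a i from by ring, sub_self]
  -- rewrite outer index set and split
  have hIcc : Finset.Icc 1 (r-1) = Finset.Ioc 0 (r-1) := by
    ext j; simp [Finset.mem_Icc, Finset.mem_Ioc]; omega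
  have hsplit : ∑ k ∈ Finset.Icc 1 (r-1), ∑ i ∈ Finset.Icc (k+1) r,
        (P ^ (a k - a i) - P ^ (a' k - a' i))
      = (∑ k ∈ Finset.Ioc 0 u, ∑ i ∈ Finset.Icc (k+1) r,
          (P ^ (a k - a i) - P ^ (a' k - a' i)))
        + ((∑ k ∈ Finset.Ioc u v, ∑ i ∈ Finset.Icc (k+1) r,
          (P ^ (a k - a i) - P ^ (a' k - a' i)))
        + (∑ k ∈ Finset.Ioc v (r-1), ∑ i ∈ Finset.Icc (k+1) r,
          (P ^ (a k - a i) - P ^ (a' k - a' i)))) := by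
    rw [hIcc,
      Finset.sum_Ioc_consecutive _ (show u ≤ v by omega) (show v ≤ r-1 from hv),
      Finset.sum_Ioc_consecutive _ (Nat.zero_le u) (show u ≤ r-1 by omega)]
  -- the right piece vanishes
  have hright0 : ∑ k ∈ Finset.Ioc v (r-1), ∑ i ∈ Finset.Icc (k+1) r,
      (P ^ (a k - a i) - P ^ (a' k - a' i)) = 0 := by
    apply Finset.sum_eq_zero
    intro k hk
    rw [Finset.mem_Ioc] at hk
    apply Finset.sum_eq_zero
    intro i hi
    rw [Finset.mem_Icc] at hi
    rw [ha'out k (Or.inr (by omega)), ha'out i (Or.inr (by omega)), sub_self]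
  -- the left piece is at least its k = u term
  have hleft : ∑ i ∈ Finset.Icc (u+1) r, (P ^ (a u - a i) - P ^ (a' u - a' i))
      ≤ ∑ k ∈ Finset.Ioc 0 u, ∑ i ∈ Finset.Icc (k+1) r,
          (P ^ (a k - a i) - P ^ (a' k - a' i)) := by
    apply Finset.single_le_sum (f := fun k => ∑ i ∈ Finset.Icc (k+1) r,
          (P ^ (a k - a i) - P ^ (a' k - a' i)))
    · intro k hk
      rw [Finset.mem_Ioc] at hk
      rw [hinnerL k hk.1 hk.2]
      apply Finset.sum_nonneg
      intro i _
      have h1 : a k - a i - 1 ≤ a k - a i := by omega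
      have h2 := zpow_le_zpow_right₀ hP1.le h1
      linarith
    · rw [Finset.mem_Ioc]; omega
  -- geometric series bound
  have hgeo : ∀ N : ℕ, ∑ m ∈ Finset.range N, (P⁻¹)^m < P / (P - 1) := by
    intro N
    induction N with
    | zero => simp; exact div_pos hP0 (by linarith)
    | succ N ih =>
      rw [Finset.sum_range_succ']
      simp only [pow_succ', pow_zero]
      rw [← Finset.mul_sum]
      have h1 : P⁻¹ * ∑ m ∈ Finset.range N, (P⁻¹)^m < P⁻¹ * (P/(P-1)) :=
        mul_lt_mul_of_pos_left ih (by positivity)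
      have h2 : P⁻¹ * (P/(P-1)) + 1 = P/(P-1) := by
        have hne : P - 1 ≠ 0 := by linarith
        field_simp
        ring
      linarith
  -- define G
  set G : ℝ := ∑ m ∈ Finset.range n, x^(m+1) with hG
  -- the k = u inner sum equals (P-1) * G
  have hFu : ∑ i ∈ Finset.Icc (u+1) v, (P ^ (a u - a i) - P ^ (a u - a i - 1))
      = (P - 1) * G := by
    rw [show Finset.Icc (u+1) v = Finset.Ico (u+1) (v+1) from (Finset.Ico_add_one_right_eq_Icc _ _).symm,
        Finset.sum_Ico_eq_sum_range, show v + 1 - (u+1) = n by omega, hG, Finset.mul_sum]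
    apply Finset.sum_congr rfl
    intro m hm
    rw [Finset.mem_range] at hm
    have hb := hblock (u+1+m) (by omega) (by omega)
    have he : a u - a (u+1+m) = -(2*((m+1 : ℕ):ℤ)) + 1 := by
      push_cast at hb ⊢; linarith
    have he2 : a u - a (u+1+m) - 1 = -(2*((m+1 : ℕ):ℤ)) := by omega
    rw [he2, hxz (m+1), he, zpow_add_one₀ hPne, hxz (m+1)]
    ring
  -- strict bound for each middle inner sum
  have hFk : ∀ k, u+1 ≤ k → k ≤ v →
      -(P ^ (a k - a v - 2)) <
        ∑ i ∈ Finset.Icc (k+1) r, (P ^ (a k - a i) - P ^ (a' k - a' i)) := by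
    intro k hk1 hk2
    rw [hinnerM k hk1 hk2]
    have h1 : ∑ i ∈ Finset.Icc (v+1) r, (P ^ (a k - a i) - P ^ (a k - a i + 1))
        = -((P-1) * ∑ i ∈ Finset.Icc (v+1) r, P ^ (a k - a i)) := by
      rw [Finset.mul_sum, ← Finset.sum_neg_distrib]
      apply Finset.sum_congr rfl
      intro i _
      rw [zpow_add_one₀ hPne]
      ring
    rw [h1, neg_lt_neg_iff]
    -- bound the sum by a geometric series
    have h2 : ∑ i ∈ Finset.Icc (v+1) r, P ^ (a k - a i)
        ≤ P ^ (a k - a v - 3) * ∑ m ∈ Finset.range (r - v), (P⁻¹)^m := by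
      rw [show Finset.Icc (v+1) r = Finset.Ico (v+1) (r+1) from (Finset.Ico_add_one_right_eq_Icc _ _).symm,
          Finset.sum_Ico_eq_sum_range, show r + 1 - (v+1) = r - v by omega, Finset.mul_sum]
      apply Finset.sum_le_sum
      intro m hm
      rw [Finset.mem_range] at hm
      have hgi := hgrow (v+1) (v+1+m) (by omega) (by omega) (by omega)
      have hexp : a k - a (v+1+m) ≤ a k - a v - 3 - (m:ℤ) := by
        push_cast at hgi ⊢; omega
      calc P ^ (a k - a (v+1+m)) ≤ P ^ (a k - a v - 3 - (m:ℤ)) :=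
            zpow_le_zpow_right₀ hP1.le hexp
        _ = P ^ (a k - a v - 3) * (P⁻¹)^m := by
            rw [zpow_sub₀ hPne, zpow_natCast, div_eq_mul_inv, inv_pow]
    have h3 : P ^ (a k - a v - 3) * ∑ m ∈ Finset.range (r - v), (P⁻¹)^m
        < P ^ (a k - a v - 3) * (P / (P-1)) :=
      mul_lt_mul_of_pos_left (hgeo (r - v)) (by positivity)
    have h4 : (P - 1) * (P ^ (a k - a v - 3) * (P / (P-1))) = P ^ (a k - a v - 2) := by
      rw [show a k - a v - 2 = (a k - a v - 3) + 1 by ring, zpow_add_one₀ hPne]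
      have hne : P - 1 ≠ 0 := by linarith
      field_simp
    have h5 : (0:ℝ) < P - 1 := by linarith
    nlinarith [Finset.sum_nonneg (fun i (_ : i ∈ Finset.Icc (v+1) r) =>
      le_of_lt (zpow_pos hP0 (a k - a i)))]
  -- sum the middle bounds
  have hmidsum : -G < ∑ k ∈ Finset.Ioc u v, ∑ i ∈ Finset.Icc (k+1) r,
      (P ^ (a k - a i) - P ^ (a' k - a' i)) := by
    have h1 : ∑ k ∈ Finset.Ioc u v, -(P ^ (a k - a v - 2))
        < ∑ k ∈ Finset.Ioc u v, ∑ i ∈ Finset.Icc (k+1) r,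
            (P ^ (a k - a i) - P ^ (a' k - a' i)) := by
      apply Finset.sum_lt_sum_of_nonempty (Finset.nonempty_Ioc.mpr huv)
      intro k hk
      rw [Finset.mem_Ioc] at hk
      exact hFk k hk.1 hk.2
    have h2 : ∑ k ∈ Finset.Ioc u v, P ^ (a k - a v - 2) = G := by
      have hL : ∑ k ∈ Finset.Ioc u v, P ^ (a k - a v - 2)
          = ∑ m ∈ Finset.range n, x ^ (n - m) := by
        rw [show Finset.Ioc u v = Finset.Ico (u+1) (v+1) from by
              rw [Finset.Ico_add_one_right_eq_Icc]; exact (Finset.Icc_add_one_left_eq_Ioc u v).symm,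
            Finset.sum_Ico_eq_sum_range, show v + 1 - (u+1) = n by omega]
        apply Finset.sum_congr rfl
        intro m hm
        rw [Finset.mem_range] at hm
        have hbk := hblock (u+1+m) (by omega) (by omega)
        have hbv := hblock v (by omega) le_rfl
        have he : a (u+1+m) - a v - 2 = -(2*((n - m : ℕ):ℤ)) := by
          have hc : ((n - m : ℕ):ℤ) = (n:ℤ) - (m:ℤ) := by
            have h : m ≤ n := by omega
            push_cast [h]; ring
          rw [hc]
          push_cast at hbk hbv ⊢
          have hnc : (n:ℤ) = (v:ℤ) - (u:ℤ) := by
            rw [hn]; push_cast [huv.le]; ring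
          linarith [hnc]
        rw [he, hxz (n - m)]
      rw [hL, hG, ← Finset.sum_range_reflect (fun j => x ^ (j+1)) n]
      apply Finset.sum_congr rfl
      intro m hm
      rw [Finset.mem_range] at hm
      congr 1
      omega
    have h3 : ∑ k ∈ Finset.Ioc u v, -(P ^ (a k - a v - 2))
        = -(∑ k ∈ Finset.Ioc u v, P ^ (a k - a v - 2)) := Finset.sum_neg_distrib _
    rw [h3, h2] at h1
    linarith
  -- assemble: the difference exceeds (P-2)*G
  have hkey : hpr P r a - hpr P r a' > (P - 2) * G := by
    rw [hD, hsplit, hright0]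
    have hFu' := hinnerL u hu le_rfl
    have := hleft
    rw [hFu', hFu] at this
    have := hmidsum
    nlinarith [hmidsum, hleft, hFu', hFu]
  -- identify (P-2)*G with the stated right hand side
  have hxn : P ^ (a (u+1) - a v - 2) = x ^ n := by
    have hbv := hblock v (by omega) le_rfl
    have he : a (u+1) - a v - 2 = -(2*((n:ℕ):ℤ)) := by
      have hnc : (n:ℤ) = (v:ℤ) - (u:ℤ) := by
        rw [hn]; push_cast [huv.le]; ring
      push_cast at hbv ⊢
      linarith [hnc]
    rw [he, hxz n]
  have hQ : P ^ (2 * ((v:ℤ) - (u:ℤ))) = (P^2)^n := by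
    have he : 2 * ((v:ℤ) - (u:ℤ)) = ((2*n : ℕ):ℤ) := by
      push_cast [huv.le, hn]; ring
    rw [he, zpow_natCast, pow_mul]
  have hxQ : x ^ n = ((P^2)^n)⁻¹ := by rw [hx, inv_pow]
  have hGclosed : G = x * ((x^n - 1)/(x - 1)) := by
    rw [hG, ← geom_sum_eq (ne_of_lt hx1), Finset.mul_sum]
    apply Finset.sum_congr rfl
    intro m _
    rw [pow_succ']
  have hrhs : (P - 2) * G
      = ((P - 2) / (P^2 - 1)) * P ^ (a (u+1) - a v - 2) * (P ^ (2 * ((v:ℤ) - (u:ℤ))) - 1) := by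
    rw [hxn, hQ, hGclosed, hxQ, hx]
    have hP2ne : (P^2) ≠ 0 := by positivity
    have hQ0 : (0:ℝ) < (P^2)^n := by positivity
    have hQne : ((P^2)^n) ≠ 0 := ne_of_gt hQ0
    have hd2 : P^2 - 1 ≠ 0 := by nlinarith
    exact stmt3_aux_id P (P^2) ((P^2)^n) hP2ne hQne hd2
  constructor
  · rw [← hrhs]; exact hkey
  · have hQ1 : (1:ℝ) < (P^2)^n := by
      apply one_lt_pow₀ (by nlinarith) (by omega)
    have hrhs0 : (0:ℝ) ≤ ((P - 2) / (P^2 - 1)) * P ^ (a (u+1) - a v - 2)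
        * (P ^ (2 * ((v:ℤ) - (u:ℤ))) - 1) := by
      apply mul_nonneg (mul_nonneg (div_nonneg (by linarith) (by nlinarith))
        (le_of_lt (zpow_pos hP0 _)))
      rw [hQ]; linarith
    rw [← hrhs] at hrhs0
    linarith [hkey]
end

section
/- Let p ≥ 2 be real, and let a = (a_1, ..., a_r) be a strictly increasing integer tuple (r ≥ 3) with indices 1 ≤ u < v ≤ r-1 such that a_{j+1} - a_j = 2 for u+1 ≤ j ≤ v-1. Define the (u,v)-derivative a' = (a'_1, ..., a'_{r-1}) by a'_j = a_j for 1 ≤ j ≤ u, a'_j = a_j + 1 for u+1 ≤ j ≤ v-1, and a'_j = a_{j+1} for v ≤ j ≤ r-1. Then h_{p,r}(a) - h_{p,r-1}(a') = (1/(p+1))(p + p^{-2(v-u-1)})(U/p^{a_{u+1}} + p^{a_v} V) + (1/(p^2-1))(1 - p^{-2(v-u-1)}), where U = Σ_{k=1}^{u} p^{a_k} and V = Σ_{i=v+1}^{r} p^{-a_i}. -/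
open Finset

set_option maxHeartbeats 1000000

private lemma sum_Ioc_shift (f : ℕ → ℝ) (s t : ℕ) :
    ∑ i ∈ Finset.Ioc s t, f (i + 1) = ∑ i ∈ Finset.Ioc (s + 1) (t + 1), f i := by
  rw [show Finset.Ioc (s+1) (t+1) = Finset.map (addRightEmbedding 1) (Finset.Ioc s t) by
    rw [Finset.map_add_right_Ioc]]
  rw [Finset.sum_map]; rfl

private lemma sum_Ioc_range (f : ℕ → ℝ) (s w : ℕ) :
    ∑ j ∈ Finset.Ioc s (s + w), f j = ∑ t ∈ Finset.range w, f (s + 1 + t) := by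
  rw [show Finset.Ioc s (s+w) = Finset.Ico (s+1) (s+1+w) by ext x; simp; omega]
  rw [Finset.sum_Ico_eq_sum_range]
  simp

private lemma hpr_split (p : ℝ) (R U V : ℕ) (hUV : U ≤ V) (hV : V ≤ R - 1) (b : ℕ → ℤ) :
    hpr p R b =
      ((∑ k ∈ Ioc 0 U, ∑ i ∈ Ioc k U, p ^ (b k - b i))
      + (∑ k ∈ Ioc 0 U, ∑ i ∈ Ioc U V, p ^ (b k - b i))
      + (∑ k ∈ Ioc 0 U, ∑ i ∈ Ioc V R, p ^ (b k - b i)))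
      + ((∑ k ∈ Ioc U V, ∑ i ∈ Ioc k V, p ^ (b k - b i))
      + (∑ k ∈ Ioc U V, ∑ i ∈ Ioc V R, p ^ (b k - b i)))
      + (∑ k ∈ Ioc V (R-1), ∑ i ∈ Ioc k R, p ^ (b k - b i)) := by
  have hVR : V ≤ R := le_trans hV (Nat.sub_le _ _)
  have h1 : ∀ t : ℕ, Finset.Icc 1 t = Finset.Ioc 0 t := by
    intro t; ext x; simp; omega
  have h2 : ∀ k t : ℕ, Finset.Icc (k+1) t = Finset.Ioc k t := by
    intro k t; ext x; simp
  rw [hpr, h1]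
  simp only [h2]
  rw [← Finset.sum_Ioc_consecutive _ (Nat.zero_le V) hV,
      ← Finset.sum_Ioc_consecutive _ (Nat.zero_le U) hUV]
  congr 1
  congr 1
  · rw [← Finset.sum_add_distrib, ← Finset.sum_add_distrib]
    apply Finset.sum_congr rfl
    intro k hk
    simp only [Finset.mem_Ioc] at hk
    rw [Finset.sum_Ioc_consecutive _ hk.2 hUV, Finset.sum_Ioc_consecutive _ (le_trans hk.2 hUV) hVR]
  · rw [← Finset.sum_add_distrib]
    apply Finset.sum_congr rfl
    intro k hk
    simp only [Finset.mem_Ioc] at hk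
    rw [Finset.sum_Ioc_consecutive _ hk.2 hVR]

private lemma key_algebra (p W X UU VV : ℝ) (hp : 2 ≤ p) (hW : W ≠ 0) (hX : X ≠ 0) :
    UU * W⁻¹ * (((X * p^2)⁻¹ - 1) / ((p^2)⁻¹ - 1))
    + X⁻¹ * ((X - 1) / (p^2 - 1))
    + W * ((X * p^2 - 1) / (p^2 - 1)) * VV
    - UU * W⁻¹ * p⁻¹ * ((X⁻¹ - 1) / ((p^2)⁻¹ - 1))
    - W * ((X - 1) / (p^2 - 1)) * p * VV
    = 1/(p+1) * (p + X⁻¹) * (UU / W + W * X * VV) + 1/(p^2-1) * (1 - X⁻¹) := by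
  have hp0 : p ≠ 0 := by positivity
  have hp2 : p^2 - 1 ≠ 0 := by nlinarith
  have hp1 : p + 1 ≠ 0 := by positivity
  have hq1 : ((p:ℝ)^2)⁻¹ - 1 ≠ 0 := by
    have h8 : (1:ℝ) < p^2 := by nlinarith
    have h9 := inv_lt_one_of_one_lt₀ h8
    intro h; exact absurd (sub_eq_zero.mp h) (ne_of_lt h9)
  have hkey : ((p:ℝ)^2)⁻¹ - 1 = -((p^2 - 1) / p^2) := by field_simp; ring
  rw [hkey]
  have h2 : ∀ A : ℝ, A / (-((p^2-1)/p^2)) = -(A * p^2 / (p^2-1)) := by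
    intro A
    have h3 : (1:ℝ) - p^2 ≠ 0 := by nlinarith
    field_simp
  rw [h2, h2, mul_inv]
  field_simp
  ring

theorem stmt_4 (p : ℝ) (hp : 2 ≤ p) (r u v : ℕ) (hr : 3 ≤ r)
    (hu : 1 ≤ u) (huv : u < v) (hv : v ≤ r - 1)
    (a : ℕ → ℤ)
    (hmono : ∀ i j, 1 ≤ i → i < j → j ≤ r → a i < a j)
    (hmid : ∀ j, u + 1 ≤ j → j ≤ v - 1 → a (j + 1) - a j = 2)
    (a' : ℕ → ℤ)
    (ha' : ∀ j, a' j = if j ≤ u then a j else if j ≤ v - 1 then a j + 1 else a (j + 1)) :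
    hpr p r a - hpr p (r - 1) a' =
      (1 / (p + 1)) * (p + p ^ (-(2 * ((v : ℤ) - (u : ℤ) - 1)))) *
        ((∑ k ∈ Finset.Icc 1 u, p ^ (a k)) / p ^ (a (u + 1)) +
          p ^ (a v) * ∑ i ∈ Finset.Icc (v + 1) r, p ^ (-(a i))) +
      (1 / (p ^ 2 - 1)) * (1 - p ^ (-(2 * ((v : ℤ) - (u : ℤ) - 1)))) := by
  have hpne : p ≠ 0 := by positivity
  have hp0 : (0:ℝ) < p := by linarith
  obtain ⟨n, hvn⟩ : ∃ n : ℕ, v = u + n + 1 := ⟨v - u - 1, by omega⟩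
  have hap : ∀ t : ℕ, t ≤ n → a (u + 1 + t) = a (u + 1) + 2 * t := by
    intro t
    induction t with
    | zero => intro _; simp
    | succ s ih =>
      intro hs
      have h1 := hmid (u + 1 + s) (by omega) (by omega)
      have h2 := ih (by omega)
      have h3 : u + 1 + (s+1) = (u + 1 + s) + 1 := by omega
      rw [h3]
      push_cast
      push_cast at h2
      omega
  have hq : ∀ t : ℕ, p ^ (-(2*(t:ℤ))) = ((p^2)^t)⁻¹ := by
    intro t
    rw [zpow_neg]
    congr 1
    rw [show (2*(t:ℤ)) = ((2*t : ℕ) : ℤ) by push_cast; ring, zpow_natCast, pow_mul]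
  have hq' : ∀ t : ℕ, p ^ ((2*(t:ℤ))) = (p^2)^t := by
    intro t
    rw [show (2*(t:ℤ)) = ((2*t : ℕ) : ℤ) by push_cast; ring, zpow_natCast, pow_mul]
  have hSneg : ∀ (w : ℕ), w ≤ n+1 → ∀ x : ℤ,
      ∑ j ∈ Ioc u (u+w), p ^ (x - a j)
        = p ^ x * (p ^ (a (u+1)))⁻¹ * ∑ t ∈ range w, ((p^2)⁻¹)^t := by
    intro w hw x
    rw [sum_Ioc_range (fun j => p ^ (x - a j)) u w, Finset.mul_sum]
    apply Finset.sum_congr rfl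
    intro t ht
    simp only [Finset.mem_range] at ht
    rw [hap t (by omega)]
    rw [show x - (a (u+1) + 2*(t:ℤ)) = x + (-(a (u+1))) + (-(2*(t:ℤ))) by ring,
        zpow_add₀ hpne, zpow_add₀ hpne, zpow_neg, hq, inv_pow]
  have hSpos : ∀ (w : ℕ), w ≤ n+1 →
      ∑ j ∈ Ioc u (u+w), p ^ (a j) = p ^ (a (u+1)) * ∑ t ∈ range w, (p^2)^t := by
    intro w hw
    rw [sum_Ioc_range (fun j => p ^ (a j)) u w, Finset.mul_sum]
    apply Finset.sum_congr rfl
    intro t ht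
    simp only [Finset.mem_range] at ht
    rw [hap t (by omega), zpow_add₀ hpne, hq']
  have hIocv : Finset.Ioc u v = Finset.Ioc u (u + (n+1)) := by rw [show u + (n+1) = v by omega]
  have hIocv1 : Finset.Ioc u (v-1) = Finset.Ioc u (u + n) := by rw [show u + n = v - 1 by omega]
  have hav : a v = a (u+1) + 2 * (n:ℤ) := by
    have h := hap n le_rfl
    rw [show u + 1 + n = v by omega] at h
    exact h
  have havneg : p ^ (-(a v)) = (p ^ (a (u+1)))⁻¹ * ((p^2)^n)⁻¹ := by
    rw [hav, show -(a (u+1) + 2*(n:ℤ)) = -(a (u+1)) + -(2*(n:ℤ)) by ring,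
        zpow_add₀ hpne, zpow_neg, hq]
  -- the pieces
  have hAM : ∑ k ∈ Ioc 0 u, ∑ i ∈ Ioc u v, p ^ (a k - a i)
      = (∑ k ∈ Ioc 0 u, p ^ (a k)) * (p ^ (a (u+1)))⁻¹ * (∑ t ∈ range (n+1), ((p^2)⁻¹)^t) := by
    rw [hIocv, Finset.sum_mul, Finset.sum_mul]
    exact Finset.sum_congr rfl (fun k _ => hSneg (n+1) le_rfl (a k))
  have hAM' : ∑ k ∈ Ioc 0 u, ∑ i ∈ Ioc u (v-1), p ^ (a k - (a i + 1))
      = (∑ k ∈ Ioc 0 u, p ^ (a k)) * (p ^ (a (u+1)))⁻¹ * p⁻¹ * (∑ t ∈ range n, ((p^2)⁻¹)^t) := by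
    rw [hIocv1, Finset.sum_mul, Finset.sum_mul, Finset.sum_mul]
    apply Finset.sum_congr rfl
    intro k _
    have h4 : ∀ i, a k - (a i + 1) = (a k - 1) - a i := by intro i; ring
    simp only [h4]
    rw [hSneg n (by omega) (a k - 1), zpow_sub₀ hpne, zpow_one]
    ring
  have hMB : ∑ k ∈ Ioc u v, ∑ i ∈ Ioc v r, p ^ (a k - a i)
      = p ^ (a (u+1)) * (∑ t ∈ range (n+1), (p^2)^t) * (∑ i ∈ Ioc v r, p ^ (-(a i))) := by
    have hin : ∀ k, (∑ i ∈ Ioc v r, p ^ (a k - a i)) = p ^ (a k) * ∑ i ∈ Ioc v r, p ^ (-(a i)) := by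
      intro k
      rw [Finset.mul_sum]
      apply Finset.sum_congr rfl
      intro i _
      rw [← zpow_add₀ hpne]
      congr 1
    simp only [hin]
    rw [← Finset.sum_mul, hIocv, hSpos (n+1) le_rfl]
  have hMB' : ∑ k ∈ Ioc u (v-1), ∑ i ∈ Ioc v r, p ^ (a k + 1 - a i)
      = p ^ (a (u+1)) * (∑ t ∈ range n, (p^2)^t) * p * (∑ i ∈ Ioc v r, p ^ (-(a i))) := by
    have hin : ∀ k, (∑ i ∈ Ioc v r, p ^ (a k + 1 - a i))
        = p ^ (a k) * p * ∑ i ∈ Ioc v r, p ^ (-(a i)) := by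
      intro k
      rw [Finset.mul_sum]
      apply Finset.sum_congr rfl
      intro i _
      rw [show a k + 1 - a i = a k + 1 + (-(a i)) by ring, zpow_add₀ hpne, zpow_add₀ hpne, zpow_one]
    simp only [hin]
    rw [← Finset.sum_mul, ← Finset.sum_mul, hIocv1, hSpos n (by omega)]
  have hMM : (∑ k ∈ Ioc u v, ∑ i ∈ Ioc k v, p ^ (a k - a i))
      = (∑ k ∈ Ioc u (v-1), ∑ i ∈ Ioc k (v-1), p ^ (a k - a i))
        + ((p^2)^n)⁻¹ * (∑ t ∈ range n, (p^2)^t) := by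
    have h1 : u ≤ v - 1 := by omega
    have h2 : v - 1 ≤ v := by omega
    have hsing : Finset.Ioc (v-1) v = {v} := by ext x; simp; omega
    rw [← Finset.sum_Ioc_consecutive _ h1 h2, hsing, Finset.sum_singleton,
        Finset.Ioc_self, Finset.sum_empty, add_zero]
    have hin : ∀ k ∈ Ioc u (v-1), (∑ i ∈ Ioc k v, p ^ (a k - a i))
        = (∑ i ∈ Ioc k (v-1), p ^ (a k - a i)) + p ^ (a k - a v) := by
      intro k hk
      simp only [Finset.mem_Ioc] at hk
      rw [← Finset.sum_Ioc_consecutive _ hk.2 h2, hsing, Finset.sum_singleton]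
    rw [Finset.sum_congr rfl hin, Finset.sum_add_distrib]
    congr 1
    have h5 : ∀ k : ℕ, p ^ (a k - a v) = p ^ (-(a v)) * p ^ (a k) := by
      intro k
      rw [← zpow_add₀ hpne]
      congr 1; ring
    simp only [h5]
    rw [← Finset.mul_sum, hIocv1, hSpos n (by omega), havneg]
    have hW' : p ^ (a (u+1)) ≠ 0 := zpow_ne_zero _ hpne
    rw [mul_comm ((p ^ (a (u+1)))⁻¹), mul_assoc, inv_mul_cancel_left₀ hW']
  -- rewrite the a'-sums
  have hS1 : (∑ k ∈ Ioc 0 u, ∑ i ∈ Ioc k u, p ^ (a' k - a' i))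
      = ∑ k ∈ Ioc 0 u, ∑ i ∈ Ioc k u, p ^ (a k - a i) := by
    apply Finset.sum_congr rfl; intro k hk
    apply Finset.sum_congr rfl; intro i hi
    simp only [Finset.mem_Ioc] at hk hi
    rw [ha' k, ha' i, if_pos (show k ≤ u by omega), if_pos (show i ≤ u by omega)]
  have hS2 : (∑ k ∈ Ioc 0 u, ∑ i ∈ Ioc u (v-1), p ^ (a' k - a' i))
      = ∑ k ∈ Ioc 0 u, ∑ i ∈ Ioc u (v-1), p ^ (a k - (a i + 1)) := by
    apply Finset.sum_congr rfl; intro k hk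
    apply Finset.sum_congr rfl; intro i hi
    simp only [Finset.mem_Ioc] at hk hi
    rw [ha' k, ha' i, if_pos (show k ≤ u by omega), if_neg (show ¬ i ≤ u by omega),
        if_pos (show i ≤ v-1 by omega)]
  have hS3 : (∑ k ∈ Ioc 0 u, ∑ i ∈ Ioc (v-1) (r-1), p ^ (a' k - a' i))
      = ∑ k ∈ Ioc 0 u, ∑ i ∈ Ioc v r, p ^ (a k - a i) := by
    apply Finset.sum_congr rfl; intro k hk
    simp only [Finset.mem_Ioc] at hk
    have step : ∀ i ∈ Ioc (v-1) (r-1), p ^ (a' k - a' i) = p ^ (a k - a (i+1)) := by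
      intro i hi; simp only [Finset.mem_Ioc] at hi
      rw [ha' k, ha' i, if_pos (show k ≤ u by omega), if_neg (show ¬ i ≤ u by omega),
          if_neg (show ¬ i ≤ v-1 by omega)]
    rw [Finset.sum_congr rfl step]
    have h6 := sum_Ioc_shift (fun i => p ^ (a k - a i)) (v-1) (r-1)
    rw [show v-1+1 = v by omega, show r-1+1 = r by omega] at h6
    exact h6
  have hS4 : (∑ k ∈ Ioc u (v-1), ∑ i ∈ Ioc k (v-1), p ^ (a' k - a' i))
      = ∑ k ∈ Ioc u (v-1), ∑ i ∈ Ioc k (v-1), p ^ (a k - a i) := by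
    apply Finset.sum_congr rfl; intro k hk
    apply Finset.sum_congr rfl; intro i hi
    simp only [Finset.mem_Ioc] at hk hi
    rw [ha' k, ha' i, if_neg (show ¬ k ≤ u by omega), if_pos (show k ≤ v-1 by omega),
        if_neg (show ¬ i ≤ u by omega), if_pos (show i ≤ v-1 by omega),
        show a k + 1 - (a i + 1) = a k - a i by ring]
  have hS5 : (∑ k ∈ Ioc u (v-1), ∑ i ∈ Ioc (v-1) (r-1), p ^ (a' k - a' i))
      = ∑ k ∈ Ioc u (v-1), ∑ i ∈ Ioc v r, p ^ (a k + 1 - a i) := by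
    apply Finset.sum_congr rfl; intro k hk
    simp only [Finset.mem_Ioc] at hk
    have step : ∀ i ∈ Ioc (v-1) (r-1), p ^ (a' k - a' i) = p ^ (a k + 1 - a (i+1)) := by
      intro i hi; simp only [Finset.mem_Ioc] at hi
      rw [ha' k, ha' i, if_neg (show ¬ k ≤ u by omega), if_pos (show k ≤ v-1 by omega),
          if_neg (show ¬ i ≤ u by omega), if_neg (show ¬ i ≤ v-1 by omega)]
    rw [Finset.sum_congr rfl step]
    have h6 := sum_Ioc_shift (fun i => p ^ (a k + 1 - a i)) (v-1) (r-1)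
    rw [show v-1+1 = v by omega, show r-1+1 = r by omega] at h6
    exact h6
  have hS6 : (∑ k ∈ Ioc (v-1) (r-1-1), ∑ i ∈ Ioc k (r-1), p ^ (a' k - a' i))
      = ∑ k ∈ Ioc v (r-1), ∑ i ∈ Ioc k r, p ^ (a k - a i) := by
    have step : ∀ k ∈ Ioc (v-1) (r-1-1), (∑ i ∈ Ioc k (r-1), p ^ (a' k - a' i))
        = ∑ i ∈ Ioc (k+1) r, p ^ (a (k+1) - a i) := by
      intro k hk; simp only [Finset.mem_Ioc] at hk
      have inner : ∀ i ∈ Ioc k (r-1), p ^ (a' k - a' i) = p ^ (a (k+1) - a (i+1)) := by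
        intro i hi; simp only [Finset.mem_Ioc] at hi
        rw [ha' k, ha' i, if_neg (show ¬ k ≤ u by omega), if_neg (show ¬ k ≤ v-1 by omega),
            if_neg (show ¬ i ≤ u by omega), if_neg (show ¬ i ≤ v-1 by omega)]
      rw [Finset.sum_congr rfl inner]
      have h6 := sum_Ioc_shift (fun i => p ^ (a (k+1) - a i)) k (r-1)
      rw [show r-1+1 = r by omega] at h6
      exact h6
    rw [Finset.sum_congr rfl step]
    have h7 := sum_Ioc_shift (fun k => ∑ i ∈ Ioc k r, p ^ (a k - a i)) (v-1) (r-1-1)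
    rw [show v-1+1 = v by omega, show r-1-1+1 = r-1 by omega] at h7
    exact h7
  -- assemble
  have hQ : p ^ (-(2 * ((v:ℤ) - (u:ℤ) - 1))) = ((p^2)^n)⁻¹ := by
    rw [show (-(2 * ((v:ℤ) - (u:ℤ) - 1))) = -(2*(n:ℤ)) by omega, hq]
  have hav2 : p ^ (a v) = p ^ (a (u+1)) * (p^2)^n := by
    rw [hav, zpow_add₀ hpne, hq']
  have hIcc1 : Finset.Icc 1 u = Finset.Ioc 0 u := by ext x; simp; omega
  have hIccv : Finset.Icc (v+1) r = Finset.Ioc v r := by ext x; simp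
  rw [hpr_split p r u v (le_of_lt huv) hv a,
      hpr_split p (r-1) u (v-1) (by omega) (by omega) a']
  rw [hS1, hS2, hS3, hS4, hS5, hS6, hAM, hAM', hMM, hMB, hMB', hQ, hav2, hIcc1, hIccv]
  have hp21 : (p:ℝ)^2 - 1 ≠ 0 := by nlinarith
  have hp2ne1 : (p:ℝ)^2 ≠ 1 := by intro h; apply hp21; rw [h]; ring
  have hqne1 : ((p:ℝ)^2)⁻¹ ≠ 1 := by
    have h8 : (1:ℝ) < p^2 := by nlinarith
    exact ne_of_lt (inv_lt_one_of_one_lt₀ h8)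
  have hp1ne : p + 1 ≠ 0 := by linarith
  have hXne : ((p:ℝ)^2)^n ≠ 0 := pow_ne_zero _ (by positivity)
  have hWne : (p : ℝ) ^ (a (u+1)) ≠ 0 := zpow_ne_zero _ hpne
  rw [geom_sum_eq hqne1 (n+1), geom_sum_eq hqne1 n, geom_sum_eq hp2ne1 (n+1), geom_sum_eq hp2ne1 n]
  simp only [inv_pow]
  rw [pow_succ ((p:ℝ)^2) n]
  linear_combination key_algebra p (p ^ (a (u+1))) (((p:ℝ)^2)^n)
    (∑ k ∈ Finset.Ioc 0 u, p ^ (a k)) (∑ i ∈ Finset.Ioc v r, p ^ (-(a i))) hp hWne hXne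
end

section
/- Let p be a prime and let a = (a_1, ..., a_r) be strictly increasing integers (r ≥ 3) with 1 ≤ u < v ≤ r-1 such that a_{u+1} - a_u = 1, a_{v+1} - a_v = 1, and a_{j+1} - a_j = 2 for u < j < v. Let a' be the (u,v)-derivative of a (a'_j = a_j for j ≤ u, a'_j = a_j + 1 for u+1 ≤ j ≤ v-1, a'_j = a_{j+1} for j ≥ v). Then h_{p,r}(a) - h_{p,r-1}(a') ≥ 1/(p-1), with equality only possible when p = 2, u = 1 and v = r-1. -/
open Finset

lemma shift_Ioc (c d : ℕ) (f : ℕ → ℝ) :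
    ∑ i ∈ Finset.Ioc (c+1) (d+1), f i = ∑ i ∈ Finset.Ioc c d, f (i+1) := by
  rw [← Finset.map_add_right_Ioc c d 1, Finset.sum_map]
  rfl

lemma delete_sum (w s : ℕ) (f : ℕ → ℕ → ℝ) :
    ∑ k ∈ Ioc 0 (w+s+1), ∑ i ∈ Ioc k (w+s+2), f k i
    = (∑ k ∈ Ioc 0 (w+s), ∑ i ∈ Ioc k (w+s+1),
        f (if k ≤ w then k else k+1) (if i ≤ w then i else i+1))
      + ((∑ k ∈ Ioc 0 w, f k (w+1)) + ∑ i ∈ Ioc (w+1) (w+s+2), f (w+1) i) := by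
  rw [← Finset.sum_Ioc_consecutive _ (Nat.zero_le w) (by omega : w ≤ w+s+1),
      ← Finset.sum_Ioc_consecutive _ (by omega : w ≤ w+1) (by omega : w+1 ≤ w+s+1),
      Nat.Ioc_succ_singleton, Finset.sum_singleton]
  rw [← Finset.sum_Ioc_consecutive _ (Nat.zero_le w) (by omega : w ≤ w+s)]
  have hL : ∀ k ∈ Ioc 0 w, ∑ i ∈ Ioc k (w+s+2), f k i
      = (∑ i ∈ Ioc k w, f k i) + (f k (w+1) + ∑ i ∈ Ioc (w+1) (w+s+2), f k i) := by
    intro k hk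
    simp only [Finset.mem_Ioc] at hk
    rw [← Finset.sum_Ioc_consecutive _ (hk.2) (by omega : w ≤ w+s+2),
        ← Finset.sum_Ioc_consecutive _ (by omega : w ≤ w+1) (by omega : w+1 ≤ w+s+2),
        Nat.Ioc_succ_singleton, Finset.sum_singleton, add_assoc]
  rw [Finset.sum_congr rfl hL]
  have hR1 : ∀ k ∈ Ioc 0 w, (∑ i ∈ Ioc k (w+s+1),
        f (if k ≤ w then k else k+1) (if i ≤ w then i else i+1))
      = (∑ i ∈ Ioc k w, f k i) + ∑ i ∈ Ioc (w+1) (w+s+2), f k i := by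
    intro k hk
    simp only [Finset.mem_Ioc] at hk
    rw [← Finset.sum_Ioc_consecutive _ (hk.2) (by omega : w ≤ w+s+1)]
    congr 1
    · refine Finset.sum_congr rfl fun i hi => ?_
      simp only [Finset.mem_Ioc] at hi
      rw [if_pos hk.2, if_pos hi.2]
    · calc ∑ i ∈ Ioc w (w+s+1), f (if k ≤ w then k else k+1) (if i ≤ w then i else i+1)
          = ∑ i ∈ Ioc w (w+s+1), f k (i+1) := by
            refine Finset.sum_congr rfl fun i hi => ?_
            simp only [Finset.mem_Ioc] at hi
            rw [if_pos hk.2, if_neg (by omega)]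
        _ = ∑ i ∈ Ioc (w+1) (w+s+2), f k i := (shift_Ioc w (w+s+1) (fun i => f k i)).symm
  rw [Finset.sum_congr rfl hR1]
  have hR2 : (∑ k ∈ Ioc w (w+s), ∑ i ∈ Ioc k (w+s+1),
        f (if k ≤ w then k else k+1) (if i ≤ w then i else i+1))
      = ∑ k ∈ Ioc (w+1) (w+s+1), ∑ i ∈ Ioc k (w+s+2), f k i := by
    calc (∑ k ∈ Ioc w (w+s), ∑ i ∈ Ioc k (w+s+1),
        f (if k ≤ w then k else k+1) (if i ≤ w then i else i+1))
        = ∑ k ∈ Ioc w (w+s), ∑ i ∈ Ioc (k+1) (w+s+2), f (k+1) i := by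
          refine Finset.sum_congr rfl fun k hk => ?_
          simp only [Finset.mem_Ioc] at hk
          calc ∑ i ∈ Ioc k (w+s+1), f (if k ≤ w then k else k+1) (if i ≤ w then i else i+1)
              = ∑ i ∈ Ioc k (w+s+1), f (k+1) (i+1) := by
                refine Finset.sum_congr rfl fun i hi => ?_
                simp only [Finset.mem_Ioc] at hi
                rw [if_neg (by omega), if_neg (by omega)]
            _ = ∑ i ∈ Ioc (k+1) (w+s+2), f (k+1) i := (shift_Ioc k (w+s+1) _).symm
      _ = ∑ k ∈ Ioc (w+1) (w+s+1), ∑ i ∈ Ioc k (w+s+2), f k i :=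
          (shift_Ioc w (w+s) (fun k => ∑ i ∈ Ioc k (w+s+2), f k i)).symm
  rw [hR2]
  simp only [Finset.sum_add_distrib]
  ring

lemma final_ineq (q G X P P' Q c D : ℝ)
    (hqpos : 0 < q) (hqle : q ≤ 1/2) (h1q2 : (0:ℝ) < 1 - q^2)
    (hGe : G * (1 - q^2) = 1 - X) (hXpos : 0 < X)
    (hPnn : 0 ≤ P) (hP'nn : 0 ≤ P') (hQnn : 0 ≤ Q)
    (hKey : D - c = P + (1-q)*P' + Q*(1 - (1-q)*q*G) + (1-2*q)*(q + q^2*X)/(1-q^2)) :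
    D ≥ c ∧ (D = c → q = 1/2 ∧ P = 0 ∧ Q = 0) := by
  have hq1 : q < 1 := by linarith
  have h1q : (0:ℝ) < 1 - q := by linarith
  have h5f : (1 - (1-q)*q*G) * (1-q^2) = (1-q)*(1+q*X) := by
    linear_combination (-(1-q)*q) * hGe
  have hfac : 0 < 1 - (1-q)*q*G := by
    have hpos : 0 < (1 - (1-q)*q*G) * (1-q^2) := by
      rw [h5f]
      exact mul_pos h1q (by nlinarith)
    rcases mul_pos_iff.1 hpos with ⟨h1, h2⟩ | ⟨h1, h2⟩
    · exact h1
    · linarith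
  have hRnn : 0 ≤ (1-2*q)*(q + q^2*X)/(1-q^2) := by
    apply div_nonneg _ (le_of_lt h1q2)
    apply mul_nonneg (by linarith)
    have h6 : 0 ≤ q^2*X := mul_nonneg (sq_nonneg q) (le_of_lt hXpos)
    linarith
  have hQfac : 0 ≤ Q*(1 - (1-q)*q*G) := mul_nonneg hQnn hfac.le
  have hP'2 : 0 ≤ (1-q)*P' := mul_nonneg h1q.le hP'nn
  constructor
  · linarith
  · intro heq
    have hz : P + (1-q)*P' + Q*(1 - (1-q)*q*G) + (1-2*q)*(q + q^2*X)/(1-q^2) = 0 := by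
      rw [← hKey, heq]; ring
    have hR0 : (1-2*q)*(q + q^2*X)/(1-q^2) = 0 := by linarith
    have hP0 : P = 0 := by linarith
    have hQ0 : Q = 0 := by
      have hQf0 : Q*(1 - (1-q)*q*G) = 0 := by linarith
      rcases mul_eq_zero.1 hQf0 with h | h
      · exact h
      · exact absurd h (ne_of_gt hfac)
    have hq12 : q = 1/2 := by
      rcases div_eq_zero_iff.1 hR0 with h | h
      · rcases mul_eq_zero.1 h with h' | h'
        · linarith
        · exfalso
          have h6 : 0 ≤ q^2*X := mul_nonneg (sq_nonneg q) (le_of_lt hXpos)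
          nlinarith
      · exfalso; linarith
    exact ⟨hq12, hP0, hQ0⟩

lemma hpr_eq (p : ℝ) (t : ℕ) (c : ℕ → ℤ) :
    hpr p (t+1) c = ∑ k ∈ Ioc 0 t, ∑ i ∈ Ioc k (t+1), p⁻¹ ^ (c i - c k) := by
  unfold hpr
  rw [show t+1-1 = t from rfl]
  refine Finset.sum_congr (by ext x; simp; omega) fun k hk => ?_
  refine Finset.sum_congr (by ext x; simp) fun i hi => ?_
  rw [inv_zpow, ← zpow_neg, neg_sub]

theorem stmt_5 (p r u v : ℕ) (hp : p.Prime) (hr : 3 ≤ r)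
    (hu : 1 ≤ u) (huv : u < v) (hv : v ≤ r - 1)
    (a : ℕ → ℤ)
    (hmono : ∀ i j, 1 ≤ i → i < j → j ≤ r → a i < a j)
    (hdu : a (u + 1) - a u = 1) (hdv : a (v + 1) - a v = 1)
    (hmid : ∀ j, u < j → j < v → a (j + 1) - a j = 2)
    (a' : ℕ → ℤ)
    (ha' : ∀ j, a' j = if j ≤ u then a j else if j ≤ v - 1 then a j + 1 else a (j + 1)) :
    hpr p r a - hpr p (r - 1) a' ≥ 1 / ((p : ℝ) - 1) ∧
    (hpr p r a - hpr p (r - 1) a' = 1 / ((p : ℝ) - 1) → p = 2 ∧ u = 1 ∧ v = r - 1) := by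
  obtain ⟨u1, rfl⟩ : ∃ u1, u = u1 + 1 := ⟨u - 1, by omega⟩
  obtain ⟨n, hveq⟩ : ∃ n, v = u1 + 1 + n + 1 := ⟨v - u1 - 2, by omega⟩
  obtain ⟨s, hreq⟩ : ∃ s, r = u1 + 1 + n + s + 2 := ⟨r - v - 1, by omega⟩
  subst hveq hreq
  set q : ℝ := (p : ℝ)⁻¹ with hqdef
  have hp2 : (2:ℝ) ≤ (p:ℝ) := by exact_mod_cast hp.two_le
  have hppos : (0:ℝ) < p := by linarith
  have hqpos : 0 < q := by rw [hqdef]; positivity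
  have hq0 : q ≠ 0 := ne_of_gt hqpos
  have hq_eq : (p:ℝ) = q⁻¹ := by rw [hqdef, inv_inv]
  have hqle : q ≤ 1/2 := by
    rw [hqdef]
    rw [inv_le_comm₀ hppos (by norm_num : (0:ℝ) < 1/2)]
    norm_num
    exact_mod_cast hp2
  have hq1 : q < 1 := by linarith
  have h1q : (0:ℝ) < 1 - q := by linarith
  have h1q2 : (0:ℝ) < 1 - q^2 := by nlinarith
  have hprog : ∀ t : ℕ, t ≤ n → a (u1 + 1 + 1 + t) - a (u1 + 1) = 2 * (t:ℤ) + 1 := by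
    intro t
    induction t with
    | zero => intro _; simpa using hdu
    | succ t ih =>
      intro ht
      have h1 := ih (by omega)
      have h2 := hmid (u1+1+1+t) (by omega) (by omega)
      have he : u1+1+1+(t+1) = (u1+1+1+t)+1 := rfl
      rw [he]
      push_cast
      push_cast at h1
      linarith
  have havu : a (u1+1+n+1) - a (u1+1) = 2*(n:ℤ)+1 := by
    have := hprog n le_rfl
    have he : u1+1+1+n = u1+1+n+1 := by omega
    rw [he] at this; linarith
  set w := u1 + 1 + n with hwdef
  set P : ℝ := ∑ k ∈ Ioc 0 u1, q ^ (a (w+1) - a k) with hPdef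
  set Q : ℝ := ∑ i ∈ Ioc (w+1+1) (w+s+2), q ^ (a i - a (w+1)) with hQdef
  set P' : ℝ := ∑ k ∈ Ioc 0 u1, ∑ i ∈ Ioc (u1+1) w, q ^ (a i - a k) with hP'def
  set G : ℝ := ∑ t ∈ range n, (q^2)^t with hGdef
  set X : ℝ := (q^2)^n with hXdef
  clear_value q w P Q P' G X
  have hIocIco : Ioc (u1+1) w = Ico (u1+1+1) (w+1) := by
    ext x; simp only [Finset.mem_Ioc, Finset.mem_Ico]; omega
  have hT : ∑ i ∈ Ioc (u1+1) w, q ^ (a i - a (u1+1)) = q * G := by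
    rw [hIocIco, Finset.sum_Ico_eq_sum_range, show w+1 - (u1+1+1) = n from by omega,
        hGdef, Finset.mul_sum]
    apply Finset.sum_congr rfl
    intro t ht
    simp only [Finset.mem_range] at ht
    have h1 := hprog t ht.le
    rw [show a (u1+1+1+t) - a (u1+1) = ((2*t+1 : ℕ) : ℤ) from by push_cast; omega,
        zpow_natCast, pow_succ, pow_mul]
    ring
  have hU : ∑ k ∈ Ioc (u1+1) w, q ^ (a (w+1) - a k) = q^2 * G := by
    rw [hIocIco, Finset.sum_Ico_eq_sum_range, show w+1 - (u1+1+1) = n from by omega]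
    have hterm : ∀ t ∈ range n, q ^ (a (w+1) - a (u1+1+1+t))
        = (fun j => q^2 * (q^2)^j) (n-1-t) := by
      intro t ht
      simp only [Finset.mem_range] at ht
      have h1 := hprog t ht.le
      rw [show a (w+1) - a (u1+1+1+t) = ((2*(n-t) : ℕ) : ℤ) from by
            push_cast [Nat.cast_sub ht.le]; omega,
          zpow_natCast, pow_mul, show n - t = (n-1-t)+1 from by omega, pow_succ]
      ring
    rw [Finset.sum_congr rfl hterm, Finset.sum_range_reflect (fun j => q^2 * (q^2)^j) n,
        hGdef, ← Finset.mul_sum]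
  have hSv2 : ∑ i ∈ Ioc (w+1) (w+s+2), q ^ (a i - a (w+1)) = q + Q := by
    rw [← Finset.sum_Ioc_consecutive _ (by omega : w+1 ≤ w+1+1) (by omega : w+1+1 ≤ w+s+2),
        Nat.Ioc_succ_singleton, Finset.sum_singleton, hdv, zpow_one, hQdef]
  have hSv1 : ∑ k ∈ Ioc 0 w, q ^ (a (w+1) - a k) = P + q*X + q^2*G := by
    rw [← Finset.sum_Ioc_consecutive _ (by omega : 0 ≤ u1) (by omega : u1 ≤ w),
        ← Finset.sum_Ioc_consecutive _ (by omega : u1 ≤ u1+1) (by omega : u1+1 ≤ w),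
        Nat.Ioc_succ_singleton, Finset.sum_singleton, hU, ← hPdef, havu]
    rw [show 2*(n:ℤ)+1 = ((2*n+1 : ℕ) : ℤ) from by push_cast; ring,
        zpow_natCast, pow_succ, pow_mul, hXdef]
    ring
  have hD : hpr (p:ℝ) (w+s+2) a - hpr (p:ℝ) (w+s+2-1) a' =
      (P + q*X + q^2*G) + (q + Q)
      + ((1-q) * (P' + q*G) - ((1-q)/q) * ((q^2*G) * (q+Q))) := by
    rw [show w+s+2 = (w+s+1)+1 from by omega, hpr_eq,
        show (w+s+1)+1-1 = (w+s)+1 from by omega, hpr_eq, ← hqdef]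
    have hdel := delete_sum w s (fun k i => q ^ (a i - a k))
    rw [show w+s+1+1 = w+s+2 from by omega, hdel]
    have hcore :
        (∑ k ∈ Ioc 0 (w+s), ∑ i ∈ Ioc k (w+s+1),
          q ^ (a (if i ≤ w then i else i+1) - a (if k ≤ w then k else k+1)))
        - (∑ k ∈ Ioc 0 (w+s), ∑ i ∈ Ioc k (w+s+1), q ^ (a' i - a' k))
        = (1-q) * (∑ k ∈ Ioc 0 (u1+1), ∑ i ∈ Ioc (u1+1) w, q ^ (a i - a k))
          - ((1-q)/q) * (∑ k ∈ Ioc (u1+1) w, ∑ i ∈ Ioc w (w+s+1), q ^ (a (i+1) - a k)) := by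
      rw [← Finset.sum_sub_distrib]
      have hsplit : ∀ k ∈ Ioc 0 (w+s),
          (∑ i ∈ Ioc k (w+s+1), q ^ (a (if i ≤ w then i else i+1) - a (if k ≤ w then k else k+1)))
          - (∑ i ∈ Ioc k (w+s+1), q ^ (a' i - a' k))
          = ∑ i ∈ Ioc k (w+s+1),
              (q ^ (a (if i ≤ w then i else i+1) - a (if k ≤ w then k else k+1)) - q ^ (a' i - a' k)) := by
        intro k _
        rw [Finset.sum_sub_distrib]
      rw [Finset.sum_congr rfl hsplit]
      rw [← Finset.sum_Ioc_consecutive _ (by omega : 0 ≤ u1+1) (by omega : u1+1 ≤ w+s),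
          ← Finset.sum_Ioc_consecutive _ (by omega : u1+1 ≤ w) (by omega : w ≤ w+s)]
      have hp3 : (∑ k ∈ Ioc w (w+s), ∑ i ∈ Ioc k (w+s+1),
          (q ^ (a (if i ≤ w then i else i+1) - a (if k ≤ w then k else k+1)) - q ^ (a' i - a' k))) = 0 := by
        apply Finset.sum_eq_zero
        intro k hk
        simp only [Finset.mem_Ioc] at hk
        apply Finset.sum_eq_zero
        intro i hi
        simp only [Finset.mem_Ioc] at hi
        rw [if_neg (by omega), if_neg (by omega), ha' i, ha' k,
            if_neg (by omega), if_neg (by omega), if_neg (by omega), if_neg (by omega)]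
        exact sub_self _
      have hp1 : (∑ k ∈ Ioc 0 (u1+1), ∑ i ∈ Ioc k (w+s+1),
          (q ^ (a (if i ≤ w then i else i+1) - a (if k ≤ w then k else k+1)) - q ^ (a' i - a' k)))
          = (1-q) * (∑ k ∈ Ioc 0 (u1+1), ∑ i ∈ Ioc (u1+1) w, q ^ (a i - a k)) := by
        rw [Finset.mul_sum]
        apply Finset.sum_congr rfl
        intro k hk
        simp only [Finset.mem_Ioc] at hk
        rw [← Finset.sum_Ioc_consecutive _ (by omega : k ≤ u1+1) (by omega : u1+1 ≤ w+s+1),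
            ← Finset.sum_Ioc_consecutive _ (by omega : u1+1 ≤ w) (by omega : w ≤ w+s+1)]
        have hz1 : (∑ i ∈ Ioc k (u1+1),
            (q ^ (a (if i ≤ w then i else i+1) - a (if k ≤ w then k else k+1)) - q ^ (a' i - a' k))) = 0 := by
          apply Finset.sum_eq_zero
          intro i hi
          simp only [Finset.mem_Ioc] at hi
          rw [if_pos (by omega), if_pos (by omega), ha' i, ha' k, if_pos (by omega), if_pos (by omega)]
          exact sub_self _
        have hz2 : (∑ i ∈ Ioc w (w+s+1),
            (q ^ (a (if i ≤ w then i else i+1) - a (if k ≤ w then k else k+1)) - q ^ (a' i - a' k))) = 0 := by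
          apply Finset.sum_eq_zero
          intro i hi
          simp only [Finset.mem_Ioc] at hi
          rw [if_neg (by omega), if_pos (by omega), ha' i, ha' k,
              if_neg (by omega), if_neg (by omega), if_pos (by omega)]
          exact sub_self _
        rw [hz1, hz2, zero_add, add_zero, Finset.mul_sum]
        apply Finset.sum_congr rfl
        intro i hi
        simp only [Finset.mem_Ioc] at hi
        rw [if_pos (by omega), if_pos (by omega), ha' i, ha' k,
            if_neg (by omega), if_pos (by omega), if_pos (by omega)]
        have he : a i + 1 - a k = (a i - a k) + 1 := by ring
        rw [he, zpow_add₀ hq0, zpow_one]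
        ring
      have hp2' : (∑ k ∈ Ioc (u1+1) w, ∑ i ∈ Ioc k (w+s+1),
          (q ^ (a (if i ≤ w then i else i+1) - a (if k ≤ w then k else k+1)) - q ^ (a' i - a' k)))
          = -(((1-q)/q) * (∑ k ∈ Ioc (u1+1) w, ∑ i ∈ Ioc w (w+s+1), q ^ (a (i+1) - a k))) := by
        rw [Finset.mul_sum, ← Finset.sum_neg_distrib]
        apply Finset.sum_congr rfl
        intro k hk
        simp only [Finset.mem_Ioc] at hk
        rw [← Finset.sum_Ioc_consecutive _ (by omega : k ≤ w) (by omega : w ≤ w+s+1)]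
        have hz1 : (∑ i ∈ Ioc k w,
            (q ^ (a (if i ≤ w then i else i+1) - a (if k ≤ w then k else k+1)) - q ^ (a' i - a' k))) = 0 := by
          apply Finset.sum_eq_zero
          intro i hi
          simp only [Finset.mem_Ioc] at hi
          rw [if_pos (by omega), if_pos (by omega), ha' i, ha' k,
              if_neg (by omega), if_pos (by omega), if_neg (by omega), if_pos (by omega)]
          have he : a i + 1 - (a k + 1) = a i - a k := by ring
          rw [he]
          exact sub_self _
        rw [hz1, zero_add, Finset.mul_sum, ← Finset.sum_neg_distrib]
        apply Finset.sum_congr rfl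
        intro i hi
        simp only [Finset.mem_Ioc] at hi
        rw [if_neg (by omega), if_pos (by omega), ha' i, ha' k,
            if_neg (by omega), if_neg (by omega), if_neg (by omega), if_pos (by omega)]
        have he : a (i+1) - (a k + 1) = (a (i+1) - a k) + (-1) := by ring
        rw [he, zpow_add₀ hq0, zpow_neg_one]
        field_simp
        ring
      rw [hp1, hp2', hp3, add_zero]
      ring
    have hSA : (∑ k ∈ Ioc 0 (u1+1), ∑ i ∈ Ioc (u1+1) w, q ^ (a i - a k)) = P' + q*G := by
      rw [← Finset.sum_Ioc_consecutive _ (by omega : 0 ≤ u1) (by omega : u1 ≤ u1+1),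
          Nat.Ioc_succ_singleton, Finset.sum_singleton, hT, ← hP'def]
    have hSB : (∑ k ∈ Ioc (u1+1) w, ∑ i ∈ Ioc w (w+s+1), q ^ (a (i+1) - a k))
        = (q^2*G) * (q+Q) := by
      have hinner : ∀ k ∈ Ioc (u1+1) w, (∑ i ∈ Ioc w (w+s+1), q ^ (a (i+1) - a k))
          = q ^ (a (w+1) - a k) * (q + Q) := by
        intro k hk
        have h1 : (∑ i ∈ Ioc w (w+s+1), q ^ (a (i+1) - a k))
            = ∑ i ∈ Ioc (w+1) (w+s+2), q ^ (a i - a k) := by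
          rw [show w+s+2 = (w+s+1)+1 from by omega]
          exact (shift_Ioc w (w+s+1) (fun i => q ^ (a i - a k))).symm
        rw [h1, ← hSv2, Finset.mul_sum]
        apply Finset.sum_congr rfl
        intro i hi
        rw [show a i - a k = (a (w+1) - a k) + (a i - a (w+1)) from by ring, zpow_add₀ hq0]
      rw [Finset.sum_congr rfl hinner, ← Finset.sum_mul, hU]
    linear_combination hcore + hSv1 + hSv2 + (1-q)*hSA - ((1-q)/q)*hSB
  have hGe : G * (1 - q^2) = 1 - X := by
    have h := geom_sum_mul (q^2) n
    rw [← hGdef, ← hXdef] at h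
    linear_combination (-1 : ℝ) * h
  have hGval : G = (1 - X)/(1 - q^2) := by
    rw [eq_div_iff (ne_of_gt h1q2)]
    exact hGe
  have hXpos : 0 < X := by rw [hXdef]; positivity
  have hRHS : 1 / ((p:ℝ) - 1) = q / (1-q) := by
    have hgt : (0:ℝ) < q⁻¹ - 1 := by
      have : (1:ℝ) ≤ q⁻¹ - 1 := by rw [← hq_eq]; linarith
      linarith
    rw [hq_eq, div_eq_div_iff (ne_of_gt hgt) (ne_of_gt h1q)]
    field_simp
  have hPnn : 0 ≤ P := by
    rw [hPdef]; exact Finset.sum_nonneg fun k _ => le_of_lt (zpow_pos hqpos _)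
  have hP'nn : 0 ≤ P' := by
    rw [hP'def]
    exact Finset.sum_nonneg fun k _ => Finset.sum_nonneg fun i _ => le_of_lt (zpow_pos hqpos _)
  have hQnn : 0 ≤ Q := by
    rw [hQdef]; exact Finset.sum_nonneg fun k _ => le_of_lt (zpow_pos hqpos _)
  have hKey : hpr (p:ℝ) (w+s+2) a - hpr (p:ℝ) (w+s+2-1) a' - 1/((p:ℝ)-1)
      = P + (1-q)*P' + Q*(1 - (1-q)*q*G) + (1-2*q)*(q + q^2*X)/(1-q^2) := by
    rw [hRHS, hD, hGval]
    have h2 : (1:ℝ) - q^2 ≠ 0 := ne_of_gt h1q2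
    have h3 : (1:ℝ) - q ≠ 0 := ne_of_gt h1q
    field_simp
    ring
  obtain ⟨hmain, hext⟩ := final_ineq q G X P P' Q (1/((p:ℝ)-1))
      (hpr (p:ℝ) (w+s+2) a - hpr (p:ℝ) (w+s+2-1) a')
      hqpos hqle h1q2 hGe hXpos hPnn hP'nn hQnn hKey
  constructor
  · exact hmain
  · intro heq
    obtain ⟨hq12, hP0, hQ0⟩ := hext heq
    have hp2' : p = 2 := by
      have h2 : (p:ℝ)⁻¹ = 1/2 := by rw [← hqdef]; exact hq12
      have h3 : (p:ℝ) = 2 := by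
        field_simp at h2
        linarith
      exact_mod_cast h3
    refine ⟨hp2', ?_, ?_⟩
    · by_contra h
      have hu1 : 1 ≤ u1 := by omega
      have hmem : 1 ∈ Finset.Ioc 0 u1 := by simp only [Finset.mem_Ioc]; omega
      have hle := Finset.single_le_sum (f := fun k => q ^ (a (w+1) - a k))
        (fun k _ => le_of_lt (zpow_pos hqpos _)) hmem
      have hpos : (0:ℝ) < q ^ (a (w+1) - a 1) := zpow_pos hqpos _
      rw [← hPdef, hP0] at hle
      exact absurd (lt_of_lt_of_le hpos hle) (lt_irrefl 0)
    · have hs0 : s = 0 := by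
        by_contra h
        have hs1 : 1 ≤ s := by omega
        have hmem : w+1+2 ∈ Finset.Ioc (w+1+1) (w+s+2) := by simp only [Finset.mem_Ioc]; omega
        have hle := Finset.single_le_sum (f := fun i => q ^ (a i - a (w+1)))
          (fun k _ => le_of_lt (zpow_pos hqpos _)) hmem
        have hpos : (0:ℝ) < q ^ (a (w+1+2) - a (w+1)) := zpow_pos hqpos _
        rw [← hQdef, hQ0] at hle
        exact absurd (lt_of_lt_of_le hpos hle) (lt_irrefl 0)
      omega
end

section
/- Let p be a prime and let a = (a_1, ..., a_r) be strictly increasing integers (r ≥ 4) with 1 ≤ u < v ≤ r-2 such that a_{u+1} - a_u = 2, a_{v+1} - a_v = 2, and a_{j+1} - a_j = 2 for all u+1 ≤ j ≤ v-1. Let a' = ∂_{u,v}(a) be the (u,v)-derivative. If additionally the consecutive differences of a' at positions u and v equal 3 (i.e. a'_{u+1} - a'_u = 3 and a'_{v+1} - a'_v = 3 after reindexing), then h_{p,r}(a) - h_{p,r-1}(a') < 1/(p-1). -/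
open Finset

lemma sum_Icc_split (f : ℕ → ℝ) (a b c : ℕ) (h1 : a ≤ b + 1) (h2 : b ≤ c) :
    ∑ i ∈ Finset.Icc a c, f i
      = ∑ i ∈ Finset.Icc a b, f i + ∑ i ∈ Finset.Icc (b + 1) c, f i := by
  rw [← Finset.sum_union]
  · congr 1
    ext x
    simp only [Finset.mem_union, Finset.mem_Icc]
    omega
  · simp only [Finset.disjoint_left, Finset.mem_Icc]
    omega

lemma sum_Icc_shift (f : ℕ → ℝ) (a b : ℕ) :
    ∑ i ∈ Finset.Icc a b, f (i + 1) = ∑ i ∈ Finset.Icc (a + 1) (b + 1), f i := by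
  rw [← Finset.map_add_right_Icc a b 1, Finset.sum_map]
  simp [addRightEmbedding]

lemma sum_Icc_to_range (f : ℕ → ℝ) (m n : ℕ) :
    ∑ i ∈ Finset.Icc m n, f i = ∑ j ∈ Finset.range (n + 1 - m), f (m + j) := by
  apply Finset.sum_nbij' (fun i => i - m) (fun j => m + j) <;>
    simp only [Finset.mem_Icc, Finset.mem_range] <;> intros <;>
      first | omega | (congr 1; omega)

lemma sum_Icc_to_range_rev (f : ℕ → ℝ) (m n : ℕ) :
    ∑ i ∈ Finset.Icc m n, f i = ∑ j ∈ Finset.range (n + 1 - m), f (n - j) := by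
  apply Finset.sum_nbij' (fun i => n - i) (fun j => n - j) <;>
    simp only [Finset.mem_Icc, Finset.mem_range] <;> intros <;>
      first | omega | (congr 1; omega)

lemma key_ineq (q C g W y e : ℝ) (hq0 : 0 < q) (hq2 : 2 * q ≤ 1)
    (hC0 : 0 ≤ C) (hg0 : 0 ≤ g) (hW0 : 0 ≤ W) (he : 0 < e) (hy : 0 < y)
    (hCe : (1 - q) * C ≤ 1 - e) (hWb : (1 - q) * W ≤ q ^ 2)
    (hgy : (1 - q ^ 2) * g + y = q ^ 2) :
    ((1 - q) * g + y) * C + g * (1 - (1/q - 1) * W) + W < q / (1 - q) := by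
  have hq1 : q < 1 := by linarith
  have h1q : 0 < 1 - q := by linarith
  have hqne : q ≠ 0 := ne_of_gt hq0
  have hy' : y = q ^ 2 - (1 - q ^ 2) * g := by linarith
  subst hy'
  have hk : 0 ≤ q - q ^ 2 * ((1 - q) * C) - (1 - q) * W := by
    nlinarith [mul_le_mul_of_nonneg_left hCe (sq_nonneg q), mul_pos (mul_pos hq0 hq0) he]
  have h11 : 1 / q - 1 = (1 - q) / q := by field_simp
  rw [h11, ← mul_lt_mul_iff_of_pos_right (mul_pos hq0 h1q)]
  have expand : (((1 - q) * g + (q ^ 2 - (1 - q ^ 2) * g)) * C +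
      g * (1 - (1 - q) / q * W) + W) * (q * (1 - q))
      = q * (1 - q) * (((1 - q) * g + (q ^ 2 - (1 - q ^ 2) * g)) * C + g + W)
        - (1 - q) ^ 2 * (g * W) := by
    field_simp
    ring
  rw [expand]
  have hrhs : q / (1 - q) * (q * (1 - q)) = q ^ 2 := by
    field_simp
  rw [hrhs]
  nlinarith [mul_nonneg (le_of_lt hy) hk, mul_pos (mul_pos (mul_pos hq0 hq0) hq0) he,
    mul_le_mul_of_nonneg_left hCe (le_of_lt (mul_pos (mul_pos hq0 hq0) hq0)),
    mul_le_mul_of_nonneg_left hWb (le_of_lt hq0)]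

theorem stmt_6 (p r u v : ℕ) (hp : p.Prime) (hr : 4 ≤ r)
    (hu : 1 ≤ u) (huv : u < v) (hv : v ≤ r - 2)
    (a : ℕ → ℤ)
    (hmono : ∀ i j, 1 ≤ i → i < j → j ≤ r → a i < a j)
    (hdu : a (u + 1) - a u = 2) (hdv : a (v + 1) - a v = 2)
    (hmid : ∀ j, u + 1 ≤ j → j ≤ v - 1 → a (j + 1) - a j = 2)
    (a' : ℕ → ℤ)
    (ha' : ∀ j, a' j = if j ≤ u then a j else if j ≤ v - 1 then a j + 1 else a (j + 1))
    (h3u : a' (u + 1) - a' u = 3) (h3v : a' v - a' (v - 1) = 3) :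
    hpr p r a - hpr p (r - 1) a' < 1 / ((p : ℝ) - 1) := by
  have hp2 : 2 ≤ p := hp.two_le
  set P : ℝ := (p : ℝ) with hPdef
  have hP2 : (2:ℝ) ≤ P := by rw [hPdef]; exact_mod_cast hp2
  have hP1 : (1:ℝ) < P := by linarith
  have hP0 : (0:ℝ) < P := by linarith
  have hPne : P ≠ 0 := ne_of_gt hP0
  have hvr : v + 2 ≤ r := by omega
  -- rule out v = u + 1
  have hs2 : u + 2 ≤ v := by
    by_contra h
    have hvu : v = u + 1 := by omega
    have h1 : a' (u + 1) = a (u + 2) := by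
      rw [ha' (u + 1), if_neg (by omega), if_neg (by omega)]
    have h2 : a' u = a u := by rw [ha' u, if_pos le_rfl]
    have h3 : a (u + 2) - a (u + 1) = 2 := by
      have h4 := hdv
      rw [hvu] at h4
      exact h4
    rw [h1, h2] at h3u
    omega
  -- step-2 window
  have hstep : ∀ j, u ≤ j → j ≤ v → a (j + 1) - a j = 2 := by
    intro j h1 h2
    by_cases e1 : j = u
    · rw [e1]; exact hdu
    · by_cases e2 : j = v
      · rw [e2]; exact hdv
      · exact hmid j (by omega) (by omega)
  have hwin : ∀ j, u ≤ j → j ≤ v + 1 → a j = a u + 2 * ((j : ℤ) - u) := by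
    intro j hj1 hj2
    obtain ⟨d, rfl⟩ : ∃ d, j = u + d := ⟨j - u, by omega⟩
    clear hj1
    induction d with
    | zero => simp
    | succ n ih =>
      have h1 : a (u + n + 1) - a (u + n) = 2 := hstep (u + n) (by omega) (by omega)
      have h2 := ih (by omega)
      have : (u + (n + 1) : ℕ) = (u + n) + 1 := by omega
      rw [this]
      push_cast
      push_cast at h2
      omega
  -- gaps at least 1
  have hgap : ∀ i d, 1 ≤ i → i + d ≤ r → (d : ℤ) ≤ a (i + d) - a i := by
    intro i d h1
    induction d with
    | zero => simp
    | succ n ih =>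
      intro h
      have h2 := ih (by omega)
      have h3 : a (i + n) < a (i + n + 1) :=
        hmono (i + n) (i + n + 1) (by omega) (by omega) (by omega)
      have : (i + (n + 1) : ℕ) = (i + n) + 1 := by omega
      rw [this]
      push_cast
      push_cast at h2
      omega
  have hgap' : ∀ i j, 1 ≤ i → i ≤ j → j ≤ r → ((j : ℤ) - i) ≤ a j - a i := by
    intro i j h1 h2 h3
    obtain ⟨d, rfl⟩ : ∃ d, j = i + d := ⟨j - i, by omega⟩
    have := hgap i d h1 (by omega)
    push_cast
    omega
  -- a' facts
  have ha'1 : ∀ j, j ≤ u → a' j = a j := fun j h => by rw [ha' j, if_pos h]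
  have ha'2 : ∀ j, u < j → j ≤ v - 1 → a' j = a j + 1 := fun j h1 h2 => by
    rw [ha' j, if_neg (by omega), if_pos h2]
  have ha'3 : ∀ j, v ≤ j → a' j = a (j + 1) := fun j h => by
    rw [ha' j, if_neg (by omega), if_neg (by omega)]
  -- abbreviations
  set x : ℝ := P⁻¹ with hxdef
  have hx0 : 0 < x := by rw [hxdef]; exact inv_pos.mpr hP0
  have hxP : x * P = 1 := by rw [hxdef]; exact inv_mul_cancel₀ hPne
  have hx2 : 2 * x ≤ 1 := by nlinarith
  have hx1 : x < 1 := by linarith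
  have hzneg : ∀ n : ℕ, P ^ (-(n:ℤ)) = x ^ n := by
    intro n
    rw [zpow_neg, zpow_natCast, hxdef, inv_pow]
  set N := v - 1 - u with hNdef
  set CR := ∑ k ∈ Finset.Icc 1 u, P ^ (a k - a u) with hCRdef
  set WR := ∑ i ∈ Finset.Icc (v+1) r, P ^ (a v - a i) with hWRdef
  set gR := ∑ j ∈ Finset.range N, (x ^ 2) ^ (j + 1) with hgRdef
  set yR := (x ^ 2) ^ (v - u) with hyRdef
  -- geometric identifications
  have hg2 : ∑ i ∈ Finset.Icc (u+1) (v-1), P ^ (a u - a i) = gR := by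
    have h := sum_Icc_to_range (fun i => P ^ (a u - a i)) (u+1) (v-1)
    rw [show v - 1 + 1 - (u+1) = N by omega] at h
    rw [h, hgRdef]
    apply Finset.sum_congr rfl
    intro j hj
    simp only [Finset.mem_range] at hj
    have hwj := hwin (u+1+j) (by omega) (by omega)
    have hexp : a u - a (u+1+j) = -((2*(j+1) : ℕ) : ℤ) := by omega
    rw [hexp, hzneg, pow_mul]
  have hg1 : ∑ k ∈ Finset.Icc (u+1) (v-1), P ^ (a k - a v) = gR := by
    have h := sum_Icc_to_range_rev (fun k => P ^ (a k - a v)) (u+1) (v-1)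
    rw [show v - 1 + 1 - (u+1) = N by omega] at h
    rw [h, hgRdef]
    apply Finset.sum_congr rfl
    intro j hj
    simp only [Finset.mem_range] at hj
    have hw1 := hwin (v-1-j) (by omega) (by omega)
    have hw2 := hwin v (by omega) (by omega)
    have hexp : a (v-1-j) - a v = -((2*(j+1) : ℕ) : ℤ) := by omega
    rw [hexp, hzneg, pow_mul]
  have yeq : P ^ (a u - a v) = yR := by
    have hw2 := hwin v (by omega) (by omega)
    have hexp : a u - a v = -((2*(v-u) : ℕ) : ℤ) := by omega
    rw [hexp, hzneg, pow_mul, hyRdef]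
  -- positivity
  have hCR0 : 0 ≤ CR := Finset.sum_nonneg fun i _ => (zpow_pos hP0 _).le
  have hWR0 : 0 ≤ WR := Finset.sum_nonneg fun i _ => (zpow_pos hP0 _).le
  have hgR0 : 0 ≤ gR := Finset.sum_nonneg fun i _ => pow_nonneg (sq_nonneg x) _
  -- bound for CR
  have hCb : (1 - x) * CR ≤ 1 - x ^ u := by
    have hterm : ∀ k ∈ Finset.Icc 1 u, P ^ (a k - a u) ≤ x ^ (u - k) := by
      intro k hk
      simp only [Finset.mem_Icc] at hk
      have h1 : a k - a u ≤ -(((u - k : ℕ) : ℤ)) := by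
        have := hgap' k u hk.1 hk.2 (by omega)
        omega
      calc P ^ (a k - a u) ≤ P ^ (-(((u - k : ℕ) : ℤ))) := zpow_le_zpow_right₀ hP1.le h1
        _ = x ^ (u - k) := hzneg _
    have h2 : CR ≤ ∑ k ∈ Finset.Icc 1 u, x ^ (u - k) := Finset.sum_le_sum hterm
    have h3 : ∑ k ∈ Finset.Icc 1 u, x ^ (u - k) = ∑ j ∈ Finset.range u, x ^ j := by
      have h := sum_Icc_to_range_rev (fun k => x ^ (u - k)) 1 u
      rw [show u + 1 - 1 = u by omega] at h
      rw [h]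
      apply Finset.sum_congr rfl
      intro j hj
      simp only [Finset.mem_range] at hj
      congr 1
      omega
    have hgs := geom_sum_mul x u
    have h5 : (0:ℝ) ≤ 1 - x := by linarith
    calc (1 - x) * CR ≤ (1 - x) * ∑ j ∈ Finset.range u, x ^ j :=
          mul_le_mul_of_nonneg_left (h2.trans_eq h3) h5
      _ = 1 - x ^ u := by linear_combination -hgs
  -- bound for WR
  have hWb : (1 - x) * WR ≤ x ^ 2 := by
    have h := sum_Icc_to_range (fun i => P ^ (a v - a i)) (v+1) r
    rw [show r + 1 - (v+1) = r - v by omega] at h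
    have hterm : ∀ j ∈ Finset.range (r - v), P ^ (a v - a (v+1+j)) ≤ x ^ (j+2) := by
      intro j hj
      simp only [Finset.mem_range] at hj
      have h1 : a v - a (v+1+j) ≤ -(((j+2 : ℕ) : ℤ)) := by
        have h2 := hgap' (v+1) (v+1+j) (by omega) (by omega) (by omega)
        omega
      calc P ^ (a v - a (v+1+j)) ≤ P ^ (-(((j+2 : ℕ) : ℤ))) := zpow_le_zpow_right₀ hP1.le h1
        _ = x ^ (j+2) := hzneg _
    have h2 : WR ≤ ∑ j ∈ Finset.range (r - v), x ^ (j + 2) := by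
      rw [hWRdef, h]
      exact Finset.sum_le_sum hterm
    have h3 : ∑ j ∈ Finset.range (r - v), x ^ (j + 2)
        = (∑ j ∈ Finset.range (r - v), x ^ j) * x ^ 2 := by
      rw [Finset.sum_mul]
      apply Finset.sum_congr rfl
      intro j _
      rw [← pow_add]
    have hgs := geom_sum_mul x (r - v)
    have h5 : (0:ℝ) ≤ 1 - x := by linarith
    have h6 : 0 ≤ x ^ (r - v) := pow_nonneg hx0.le _
    calc (1 - x) * WR ≤ (1 - x) * ((∑ j ∈ Finset.range (r - v), x ^ j) * x ^ 2) :=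
          mul_le_mul_of_nonneg_left (h2.trans_eq h3) h5
      _ = (1 - x ^ (r - v)) * x ^ 2 := by linear_combination (-(x^2)) * hgs
      _ ≤ x ^ 2 := by nlinarith [mul_nonneg h6 (sq_nonneg x)]
  -- geometric identity for gR
  have hgy : (1 - x ^ 2) * gR + yR = x ^ 2 := by
    have hgs := geom_sum_mul (x^2) N
    have hgR2 : gR = (∑ j ∈ Finset.range N, (x^2)^j) * x ^ 2 := by
      rw [hgRdef, Finset.sum_mul]
      exact Finset.sum_congr rfl fun j _ => pow_succ _ _
    have hyR2 : yR = (x^2)^N * x ^ 2 := by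
      rw [hyRdef, show v - u = N + 1 by omega, pow_succ]
    rw [hgR2, hyR2]
    linear_combination (-(x^2)) * hgs
  -- expansion of hpr p r a
  have e1 : v - 1 + 1 = v := by omega
  have expA : hpr P r a
      = (∑ k ∈ Finset.Icc 1 (v-1), ((∑ i ∈ Finset.Icc (k+1) (v-1), P ^ (a k - a i))
          + P ^ (a k - a v) + ∑ i ∈ Finset.Icc (v+1) r, P ^ (a k - a i)))
        + WR
        + ∑ k ∈ Finset.Icc (v+1) (r-1), ∑ i ∈ Finset.Icc (k+1) r, P ^ (a k - a i) := by
    unfold hpr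
    rw [sum_Icc_split _ 1 (v-1) (r-1) (by omega) (by omega), e1,
      sum_Icc_split _ v v (r-1) (by omega) (by omega)]
    simp only [Finset.Icc_self, Finset.sum_singleton]
    have rows : ∀ k ∈ Finset.Icc 1 (v-1), (∑ i ∈ Finset.Icc (k+1) r, P ^ (a k - a i))
        = (∑ i ∈ Finset.Icc (k+1) (v-1), P ^ (a k - a i)) + P ^ (a k - a v)
          + ∑ i ∈ Finset.Icc (v+1) r, P ^ (a k - a i) := by
      intro k hk
      simp only [Finset.mem_Icc] at hk
      rw [sum_Icc_split _ (k+1) (v-1) r (by omega) (by omega), e1,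
        sum_Icc_split _ v v r (by omega) (by omega)]
      simp only [Finset.Icc_self, Finset.sum_singleton]
      ring
    rw [Finset.sum_congr rfl rows, hWRdef]
    ring
  -- expansion of hpr p (r-1) a'
  have expB : hpr P (r-1) a'
      = (∑ k ∈ Finset.Icc 1 (v-1), ((∑ i ∈ Finset.Icc (k+1) (v-1), P ^ (a' k - a' i))
          + ∑ i ∈ Finset.Icc (v+1) r, P ^ (a' k - a i)))
        + ∑ k ∈ Finset.Icc (v+1) (r-1), ∑ i ∈ Finset.Icc (k+1) r, P ^ (a k - a i) := by
    unfold hpr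
    rw [show r - 1 - 1 = r - 2 by omega,
      sum_Icc_split _ 1 (v-1) (r-2) (by omega) (by omega), e1]
    congr 1
    · apply Finset.sum_congr rfl
      intro k hk
      simp only [Finset.mem_Icc] at hk
      rw [sum_Icc_split _ (k+1) (v-1) (r-1) (by omega) (by omega), e1]
      congr 1
      have t1 : ∀ i ∈ Finset.Icc v (r-1), P ^ (a' k - a' i) = P ^ (a' k - a (i+1)) := by
        intro i hi
        simp only [Finset.mem_Icc] at hi
        rw [ha'3 i (by omega)]
      rw [Finset.sum_congr rfl t1]
      have t2 : (∑ i ∈ Finset.Icc v (r-1), P ^ (a' k - a (i+1)))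
          = ∑ i ∈ Finset.Icc (v+1) r, P ^ (a' k - a i) := by
        have h := sum_Icc_shift (fun i => P ^ (a' k - a i)) v (r-1)
        rw [show r - 1 + 1 = r by omega] at h
        exact h
      rw [t2]
    · have t3 : ∀ k ∈ Finset.Icc v (r-2), (∑ i ∈ Finset.Icc (k+1) (r-1), P ^ (a' k - a' i))
          = ∑ i ∈ Finset.Icc (k+2) r, P ^ (a (k+1) - a i) := by
        intro k hk
        simp only [Finset.mem_Icc] at hk
        have t4 : ∀ i ∈ Finset.Icc (k+1) (r-1), P ^ (a' k - a' i) = P ^ (a (k+1) - a (i+1)) := by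
          intro i hi
          simp only [Finset.mem_Icc] at hi
          rw [ha'3 k (by omega), ha'3 i (by omega)]
        rw [Finset.sum_congr rfl t4]
        have h := sum_Icc_shift (fun i => P ^ (a (k+1) - a i)) (k+1) (r-1)
        rw [show r - 1 + 1 = r by omega] at h
        exact h
      rw [Finset.sum_congr rfl t3]
      have h := sum_Icc_shift (fun k => ∑ i ∈ Finset.Icc (k+1) r, P ^ (a k - a i)) v (r-2)
      rw [show r - 2 + 1 = r - 1 by omega] at h
      exact h
  -- row computations
  have rowA : ∀ k ∈ Finset.Icc 1 u,
      (((∑ i ∈ Finset.Icc (k+1) (v-1), P ^ (a k - a i)) + P ^ (a k - a v)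
          + ∑ i ∈ Finset.Icc (v+1) r, P ^ (a k - a i))
        - ((∑ i ∈ Finset.Icc (k+1) (v-1), P ^ (a' k - a' i))
          + ∑ i ∈ Finset.Icc (v+1) r, P ^ (a' k - a i)))
      = P ^ (a k - a u) * ((1 - x) * gR + yR) := by
    intro k hk
    simp only [Finset.mem_Icc] at hk
    have hk' : a' k = a k := ha'1 k hk.2
    have f1 : ∑ i ∈ Finset.Icc (v+1) r, P ^ (a' k - a i)
        = ∑ i ∈ Finset.Icc (v+1) r, P ^ (a k - a i) := by rw [hk']
    have f2 : ∑ i ∈ Finset.Icc (k+1) (v-1), P ^ (a k - a i)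
        = ∑ i ∈ Finset.Icc (k+1) u, P ^ (a k - a i)
          + ∑ i ∈ Finset.Icc (u+1) (v-1), P ^ (a k - a i) :=
      sum_Icc_split _ (k+1) u (v-1) (by omega) (by omega)
    have f3 : ∑ i ∈ Finset.Icc (k+1) (v-1), P ^ (a' k - a' i)
        = ∑ i ∈ Finset.Icc (k+1) u, P ^ (a k - a i)
          + x * ∑ i ∈ Finset.Icc (u+1) (v-1), P ^ (a k - a i) := by
      rw [sum_Icc_split _ (k+1) u (v-1) (by omega) (by omega)]
      congr 1
      · apply Finset.sum_congr rfl
        intro i hi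
        simp only [Finset.mem_Icc] at hi
        rw [hk', ha'1 i (by omega)]
      · rw [Finset.mul_sum]
        apply Finset.sum_congr rfl
        intro i hi
        simp only [Finset.mem_Icc] at hi
        rw [hk', ha'2 i (by omega) (by omega),
          show a k - (a i + 1) = (-((1:ℕ):ℤ)) + (a k - a i) by push_cast; ring,
          zpow_add₀ hPne, hzneg, pow_one]
    have f4 : ∑ i ∈ Finset.Icc (u+1) (v-1), P ^ (a k - a i) = P ^ (a k - a u) * gR := by
      rw [← hg2, Finset.mul_sum]
      apply Finset.sum_congr rfl
      intro i _
      rw [← zpow_add₀ hPne]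
      congr 1
      ring
    have f5 : P ^ (a k - a v) = P ^ (a k - a u) * yR := by
      rw [← yeq, ← zpow_add₀ hPne]
      congr 1
      ring
    rw [f1, f2, f3, f4, f5]
    ring
  have rowB : ∀ k ∈ Finset.Icc (u+1) (v-1),
      (((∑ i ∈ Finset.Icc (k+1) (v-1), P ^ (a k - a i)) + P ^ (a k - a v)
          + ∑ i ∈ Finset.Icc (v+1) r, P ^ (a k - a i))
        - ((∑ i ∈ Finset.Icc (k+1) (v-1), P ^ (a' k - a' i))
          + ∑ i ∈ Finset.Icc (v+1) r, P ^ (a' k - a i)))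
      = P ^ (a k - a v) * (1 - (P - 1) * WR) := by
    intro k hk
    simp only [Finset.mem_Icc] at hk
    have hk' : a' k = a k + 1 := ha'2 k (by omega) (by omega)
    have g1 : ∑ i ∈ Finset.Icc (k+1) (v-1), P ^ (a' k - a' i)
        = ∑ i ∈ Finset.Icc (k+1) (v-1), P ^ (a k - a i) := by
      apply Finset.sum_congr rfl
      intro i hi
      simp only [Finset.mem_Icc] at hi
      rw [hk', ha'2 i (by omega) (by omega)]
      congr 1
      ring
    have g2 : ∑ i ∈ Finset.Icc (v+1) r, P ^ (a' k - a i)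
        = P * ∑ i ∈ Finset.Icc (v+1) r, P ^ (a k - a i) := by
      rw [Finset.mul_sum]
      apply Finset.sum_congr rfl
      intro i _
      rw [hk', show a k + 1 - a i = (1:ℤ) + (a k - a i) by ring, zpow_add₀ hPne, zpow_one]
    have g3 : ∑ i ∈ Finset.Icc (v+1) r, P ^ (a k - a i) = P ^ (a k - a v) * WR := by
      rw [hWRdef, Finset.mul_sum]
      apply Finset.sum_congr rfl
      intro i _
      rw [← zpow_add₀ hPne]
      congr 1
      ring
    rw [g1, g2, g3]
    ring
  -- the master identity
  have hfinal : hpr P r a - hpr P (r-1) a'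
      = ((1 - x) * gR + yR) * CR + gR * (1 - (P - 1) * WR) + WR := by
    rw [expA, expB]
    rw [show ∀ S1 S2 T W : ℝ, S1 + W + T - (S2 + T) = (S1 - S2) + W from by intros; ring]
    rw [← Finset.sum_sub_distrib,
      sum_Icc_split _ 1 u (v-1) (by omega) (by omega),
      Finset.sum_congr rfl rowA, Finset.sum_congr rfl rowB,
      ← Finset.sum_mul, ← Finset.sum_mul, ← hCRdef, hg1]
    ring
  rw [hfinal]
  have main := key_ineq x CR gR WR yR (x ^ u) hx0 hx2 hCR0 hgR0 hWR0
    (pow_pos hx0 u) (by rw [hyRdef]; positivity) hCb hWb hgy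
  have e2 : 1 / x - 1 = P - 1 := by rw [hxdef, one_div, inv_inv]
  have e3 : x / (1 - x) = 1 / (P - 1) := by
    rw [div_eq_div_iff (by linarith) (by linarith)]
    linear_combination hxP
  rw [e2, e3] at main
  exact main
end

section
/- Let p be a prime, s an odd positive integer, and let a = (0, 2, 4, ..., s-3, s-1) be the arithmetic tuple of length r = (s+1)/2 with common difference 2. Then h_{p,r}(a) = ((s-1)p^{s+1} - (s+1)p^{s-1} + 2) / (2(p^2-1)^2 p^{s-1}). -/
lemma geo_aux (q : ℝ) (hq0 : q ≠ 0) (hq1 : q ≠ 1) (m : ℕ) :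
    ∑ k ∈ Finset.Icc 1 m, q ^ ((k : ℤ) - (m + 1)) = (q ^ m - 1) / ((q - 1) * q ^ m) := by
  rw [← Finset.Ico_add_one_right_eq_Icc, Finset.sum_Ico_eq_sum_range]
  have h2 : m + 1 - 1 = m := by omega
  rw [h2]
  have h1 : ∀ i : ℕ, q ^ (((1 + i : ℕ) : ℤ) - ((m : ℤ) + 1)) = q ^ i * (q ^ m)⁻¹ := by
    intro i
    have he : (((1 + i : ℕ) : ℤ) - ((m : ℤ) + 1)) = (i : ℤ) - m := by push_cast; ring
    rw [he, zpow_sub₀ hq0, zpow_natCast, zpow_natCast]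
    ring
  rw [Finset.sum_congr rfl fun i _ => h1 i, ← Finset.sum_mul, geom_sum_eq hq1]
  have hqm : q ^ m ≠ 0 := pow_ne_zero _ hq0
  field_simp

lemma main_aux (q : ℝ) (hq0 : q ≠ 0) (hq1 : q ≠ 1) (m : ℕ) :
    ∑ k ∈ Finset.Icc 1 m, ∑ i ∈ Finset.Icc (k + 1) (m + 1), q ^ ((k : ℤ) - i) =
      ((m : ℝ) * q ^ (m + 1) - ((m : ℝ) + 1) * q ^ m + 1) / ((q - 1) ^ 2 * q ^ m) := by
  have hq1' : q - 1 ≠ 0 := sub_ne_zero.mpr hq1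
  induction m with
  | zero => simp
  | succ n ih =>
    have hstep : ∀ k ∈ Finset.Icc 1 (n + 1),
        ∑ i ∈ Finset.Icc (k + 1) (n + 2), q ^ ((k : ℤ) - i) =
        (∑ i ∈ Finset.Icc (k + 1) (n + 1), q ^ ((k : ℤ) - i)) + q ^ ((k : ℤ) - (n + 2)) := by
      intro k hk
      rw [Finset.mem_Icc] at hk
      rw [Finset.sum_Icc_succ_top (show k + 1 ≤ (n + 1) + 1 by omega)]
      push_cast
      rw [show ((n:ℤ) + 1 + 1) = (n:ℤ) + 2 by ring]
    rw [Finset.sum_congr rfl hstep, Finset.sum_add_distrib]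
    have houter : ∑ k ∈ Finset.Icc 1 (n + 1), ∑ i ∈ Finset.Icc (k + 1) (n + 1), q ^ ((k : ℤ) - i) =
        ∑ k ∈ Finset.Icc 1 n, ∑ i ∈ Finset.Icc (k + 1) (n + 1), q ^ ((k : ℤ) - i) := by
      rw [Finset.sum_Icc_succ_top (by omega : 1 ≤ n + 1)]
      simp
    have hgeo : ∑ k ∈ Finset.Icc 1 (n + 1), q ^ ((k : ℤ) - ((n : ℤ) + 2)) =
        (q ^ (n + 1) - 1) / ((q - 1) * q ^ (n + 1)) := by
      have := geo_aux q hq0 hq1 (n + 1)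
      have hc : ∀ k : ℕ, ((k : ℤ) - (((n + 1 : ℕ) : ℤ) + 1)) = (k : ℤ) - ((n : ℤ) + 2) := by
        intro k; push_cast; ring
      rw [Finset.sum_congr rfl fun k _ => by rw [hc k]] at this
      exact this
    rw [houter, ih, hgeo]
    have hqn : q ^ n ≠ 0 := pow_ne_zero _ hq0
    have hqn1 : q ^ (n + 1) ≠ 0 := pow_ne_zero _ hq0
    push_cast
    field_simp
    ring

theorem stmt_7 (p s r : ℕ) (hp : p.Prime) (hs : Odd s) (hs1 : 1 ≤ s)
    (hr : r = (s + 1) / 2) :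
    hpr p r (fun i => 2 * ((i : ℤ) - 1)) =
      (((s : ℝ) - 1) * (p : ℝ) ^ (s + 1) - ((s : ℝ) + 1) * (p : ℝ) ^ (s - 1) + 2) /
        (2 * ((p : ℝ) ^ 2 - 1) ^ 2 * (p : ℝ) ^ (s - 1)) := by
  obtain ⟨m, hm⟩ := hs
  subst hm
  have hrm : r = m + 1 := by omega
  subst hrm
  have hp2 : (2 : ℝ) ≤ (p : ℝ) := by exact_mod_cast hp.two_le
  have hp0 : (p : ℝ) ≠ 0 := by linarith
  set q : ℝ := (p : ℝ) ^ 2 with hq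
  have hq0 : q ≠ 0 := pow_ne_zero _ hp0
  have hq1 : q ≠ 1 := by
    have : (4 : ℝ) ≤ q := by nlinarith
    linarith
  have hterm : ∀ k i : ℕ, (p : ℝ) ^ (2 * ((k : ℤ) - 1) - 2 * ((i : ℤ) - 1)) = q ^ ((k : ℤ) - i) := by
    intro k i
    have : 2 * ((k : ℤ) - 1) - 2 * ((i : ℤ) - 1) = 2 * ((k : ℤ) - i) := by ring
    have h2 : (p : ℝ) ^ (2 : ℤ) = q := by rw [hq]; norm_cast
    rw [this, zpow_mul, h2]
  have hL : hpr p (m + 1) (fun i => 2 * ((i : ℤ) - 1)) =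
      ∑ k ∈ Finset.Icc 1 m, ∑ i ∈ Finset.Icc (k + 1) (m + 1), q ^ ((k : ℤ) - i) := by
    unfold hpr
    simp only [Nat.add_sub_cancel]
    exact Finset.sum_congr rfl fun k _ => Finset.sum_congr rfl fun i _ => hterm k i
  rw [hL, main_aux q hq0 hq1 m]
  have h1 : 2 * m + 1 + 1 = 2 * (m + 1) := by ring
  have h2 : 2 * m + 1 - 1 = 2 * m := by omega
  rw [h1, h2]
  have hpow1 : (p : ℝ) ^ (2 * (m + 1)) = q ^ (m + 1) := by rw [hq, ← pow_mul, mul_comm]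
  have hpow2 : (p : ℝ) ^ (2 * m) = q ^ m := by rw [hq, ← pow_mul, mul_comm]
  rw [hpow1, hpow2]
  have hq1' : q - 1 ≠ 0 := sub_ne_zero.mpr hq1
  have hqm : q ^ m ≠ 0 := pow_ne_zero _ hq0
  push_cast
  field_simp
  ring
end

section
/- Let p be a prime, s an even positive integer, and let a = (0, 2, 4, ..., s-2, s-1) of length r = (s+2)/2 (arithmetic with difference 2 up to s-2, then final step of size 1). Then h_{p,r}(a) = ((s-2)p^s - s p^{s-2} + 2)/(2(p^2-1)^2 p^{s-2}) + (p^s - 1)/((p^2-1) p^{s-1}). -/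
lemma sumA (p : ℝ) (hp : p ≠ 0) (h1 : p ^ 2 - 1 ≠ 0) (m : ℕ) :
    ∑ k ∈ Finset.Icc 1 m, p ^ (2 * (k : ℤ)) =
      p ^ 2 * (p ^ (2 * (m : ℤ)) - 1) / (p ^ 2 - 1) := by
  induction m with
  | zero => simp
  | succ n ih =>
    rw [Finset.sum_Icc_succ_top (by omega), ih]
    have h2 : p ^ (2 * ((n:ℤ) + 1)) = p ^ (2 * (n:ℤ)) * p ^ 2 := by
      rw [mul_add, mul_one, zpow_add₀ hp, zpow_two]
      ring
    push_cast
    rw [h2]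
    field_simp
    ring

lemma sumB (p : ℝ) (hp : p ≠ 0) (h1 : p ^ 2 - 1 ≠ 0) (m : ℕ) :
    ∑ k ∈ Finset.Icc 1 m, ∑ i ∈ Finset.Icc (k + 1) m, p ^ (2 * (k : ℤ) - 2 * (i : ℤ)) =
      (((m:ℝ) - 1) * p ^ (2 * (m : ℤ)) * p ^ 2 - (m:ℝ) * p ^ (2 * (m : ℤ)) + p ^ 2) /
        ((p ^ 2 - 1) ^ 2 * p ^ (2 * (m : ℤ))) := by
  induction m with
  | zero => simp
  | succ n ih =>
    have split : ∀ k ∈ Finset.Icc 1 n,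
        (∑ i ∈ Finset.Icc (k + 1) (n + 1), p ^ (2 * (k:ℤ) - 2 * (i:ℤ)))
          = (∑ i ∈ Finset.Icc (k + 1) n, p ^ (2 * (k:ℤ) - 2 * (i:ℤ)))
            + p ^ (2 * (k:ℤ) - 2 * ((n:ℤ) + 1)) := by
      intro k hk
      rw [Finset.sum_Icc_succ_top (by simp only [Finset.mem_Icc] at hk; omega),
        (by push_cast; ring : ((n + 1 : ℕ) : ℤ) = (n : ℤ) + 1)]
    rw [Finset.sum_Icc_succ_top (by omega)]
    rw [Finset.Icc_eq_empty (by omega : ¬ (n + 1 + 1 ≤ n + 1)), Finset.sum_empty, add_zero]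
    rw [Finset.sum_congr rfl split, Finset.sum_add_distrib, ih]
    have key : ∑ k ∈ Finset.Icc 1 n, p ^ (2 * (k:ℤ) - 2 * ((n:ℤ) + 1))
        = (p ^ 2 * (p ^ (2 * (n:ℤ)) - 1) / (p ^ 2 - 1)) * p ^ (-(2 * ((n:ℤ) + 1))) := by
      rw [← sumA p hp h1 n, Finset.sum_mul]
      refine Finset.sum_congr rfl fun k hk => ?_
      rw [← zpow_add₀ hp]
      congr 1
      try ring
    rw [key]
    have e1 : p ^ (2 * ((n:ℤ) + 1)) = p ^ (2 * (n:ℤ)) * p ^ 2 := by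
      rw [mul_add, mul_one, zpow_add₀ hp, zpow_two]
      ring
    have e2 : p ^ (-(2 * ((n:ℤ) + 1))) = (p ^ (2 * (n:ℤ)) * p ^ 2)⁻¹ := by
      rw [zpow_neg, e1]
    push_cast
    rw [e1, e2]
    have hx : p ^ (2 * (n:ℤ)) ≠ 0 := zpow_ne_zero _ hp
    field_simp
    ring

theorem stmt_8 (p s r : ℕ) (hp : p.Prime) (hs : Even s) (hs1 : 1 ≤ s)
    (hr : r = (s + 2) / 2) :
    hpr p r (fun i => if i = r then (s : ℤ) - 1 else 2 * ((i : ℤ) - 1)) =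
      (((s : ℝ) - 2) * (p : ℝ) ^ s - (s : ℝ) * (p : ℝ) ^ (s - 2) + 2) /
        (2 * ((p : ℝ) ^ 2 - 1) ^ 2 * (p : ℝ) ^ (s - 2)) +
      ((p : ℝ) ^ s - 1) / (((p : ℝ) ^ 2 - 1) * (p : ℝ) ^ (s - 1)) := by
  obtain ⟨m, hm⟩ := hs
  subst hm
  have hm1 : 1 ≤ m := by omega
  have hrm : r = m + 1 := by omega
  subst hrm
  have hp1 : (1:ℝ) < (p:ℝ) := by exact_mod_cast hp.one_lt
  have hp0 : (p:ℝ) ≠ 0 := by positivity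
  have h1 : (p:ℝ) ^ 2 - 1 ≠ 0 := by nlinarith
  unfold hpr
  simp only [Nat.add_sub_cancel]
  have split : ∀ k ∈ Finset.Icc 1 m,
      (∑ i ∈ Finset.Icc (k + 1) (m + 1), (p:ℝ) ^
        ((if k = m + 1 then ((m + m : ℕ) : ℤ) - 1 else 2 * ((k : ℤ) - 1)) -
         (if i = m + 1 then ((m + m : ℕ) : ℤ) - 1 else 2 * ((i : ℤ) - 1))))
      = (∑ i ∈ Finset.Icc (k + 1) m, (p:ℝ) ^ (2 * (k:ℤ) - 2 * (i:ℤ)))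
        + (p:ℝ) ^ (2 * (k:ℤ)) * (p:ℝ) ^ (-(2 * (m:ℤ) + 1)) := by
    intro k hk
    simp only [Finset.mem_Icc] at hk
    rw [Finset.sum_Icc_succ_top (by omega)]
    congr 1
    · refine Finset.sum_congr rfl fun i hi => ?_
      simp only [Finset.mem_Icc] at hi
      rw [if_neg (by omega), if_neg (by omega)]
      congr 1
      ring
    · rw [if_neg (by omega), if_pos rfl, ← zpow_add₀ hp0]
      congr 1
      push_cast
      ring
  rw [Finset.sum_congr rfl split, Finset.sum_add_distrib, sumB (p:ℝ) hp0 h1 m,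
    ← Finset.sum_mul, sumA (p:ℝ) hp0 h1 m]
  -- now pure algebra
  have e1 : ((p:ℝ)) ^ (m + m) = (p:ℝ) ^ (2 * (m:ℤ)) := by
    rw [← zpow_natCast]
    congr 1
    push_cast
    ring
  have e2 : ((p:ℝ)) ^ (m + m - 2) = (p:ℝ) ^ (2 * (m:ℤ)) / (p:ℝ) ^ 2 := by
    rw [eq_div_iff (by positivity), ← pow_add, (by omega : m + m - 2 + 2 = m + m), e1]
  have e3 : ((p:ℝ)) ^ (m + m - 1) = (p:ℝ) ^ (2 * (m:ℤ)) / (p:ℝ) := by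
    rw [eq_div_iff hp0, ← pow_succ, (by omega : m + m - 1 + 1 = m + m), e1]
  have e4 : ((p:ℝ)) ^ (-(2 * (m:ℤ) + 1)) = ((p:ℝ) ^ (2 * (m:ℤ)) * (p:ℝ))⁻¹ := by
    rw [zpow_neg, zpow_add₀ hp0, zpow_one]
  rw [e1, e2, e3, e4]
  have hx : (p:ℝ) ^ (2 * (m:ℤ)) ≠ 0 := zpow_ne_zero _ hp0
  push_cast
  field_simp
  ring
end

section
/- Let p be a prime and s an odd positive integer with s ≥ 1, and let r = (s+1)/2. Then 2(p-1)p^{s-1}(r - (p-1)·h_{p,r}(0,2,4,...,s-1)) = (1/(p+1)^2)·((s+1)(p^2-1)p^s + 2(p^{s+1} - 1)). -/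
lemma geomU (q : ℝ) : ∀ r : ℕ,
    (∑ k ∈ Finset.Icc 1 r, q ^ (r + 1 - k)) * (1 - q) = q - q ^ (r + 1) := by
  intro r
  induction r with
  | zero => simp
  | succ n ih =>
    rw [Finset.sum_Icc_succ_top (by omega : 1 ≤ n + 1)]
    have h : ∀ k ∈ Finset.Icc 1 n, q ^ (n + 1 + 1 - k) = q * q ^ (n + 1 - k) := by
      intro k hk
      simp only [Finset.mem_Icc] at hk
      rw [← pow_succ']
      congr 1
      omega
    rw [Finset.sum_congr rfl h, ← Finset.mul_sum]
    have h2 : n + 1 + 1 - (n + 1) = 1 := by omega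
    rw [h2]
    have expand : (q * (∑ k ∈ Finset.Icc 1 n, q ^ (n + 1 - k)) + q ^ 1) * (1 - q)
        = q * ((∑ k ∈ Finset.Icc 1 n, q ^ (n + 1 - k)) * (1 - q)) + q ^ 1 * (1 - q) := by
      ring
    rw [expand, ih]
    ring

lemma hprH (q : ℝ) : ∀ r : ℕ,
    (∑ k ∈ Finset.Icc 1 (r - 1), ∑ i ∈ Finset.Icc (k + 1) r, q ^ (i - k)) * (1 - q) ^ 2
      = ((r : ℝ) - 1) * q - (r : ℝ) * q ^ 2 + q ^ (r + 1) := by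
  intro r
  induction r with
  | zero => simp
  | succ n ih =>
    have hsum : (∑ k ∈ Finset.Icc 1 (n + 1 - 1), ∑ i ∈ Finset.Icc (k + 1) (n + 1), q ^ (i - k))
        = (∑ k ∈ Finset.Icc 1 (n - 1), ∑ i ∈ Finset.Icc (k + 1) n, q ^ (i - k))
          + ∑ k ∈ Finset.Icc 1 n, q ^ (n + 1 - k) := by
      simp only [Nat.add_sub_cancel]
      have h1 : ∀ k ∈ Finset.Icc 1 n,
          (∑ i ∈ Finset.Icc (k + 1) (n + 1), q ^ (i - k))
            = (∑ i ∈ Finset.Icc (k + 1) n, q ^ (i - k)) + q ^ (n + 1 - k) := by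
        intro k hk
        simp only [Finset.mem_Icc] at hk
        rw [Finset.sum_Icc_succ_top (by omega : k + 1 ≤ n + 1)]
      rw [Finset.sum_congr rfl h1, Finset.sum_add_distrib]
      congr 1
      refine (Finset.sum_subset ?_ ?_).symm
      · exact Finset.Icc_subset_Icc_right (by omega)
      · intro k hk hk'
        simp only [Finset.mem_Icc] at hk hk'
        have hkn : k = n := by omega
        subst hkn
        rw [Finset.Icc_eq_empty (by omega)]
        simp
    rw [hsum]
    have expand : ((∑ k ∈ Finset.Icc 1 (n - 1), ∑ i ∈ Finset.Icc (k + 1) n, q ^ (i - k))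
          + ∑ k ∈ Finset.Icc 1 n, q ^ (n + 1 - k)) * (1 - q) ^ 2
        = (∑ k ∈ Finset.Icc 1 (n - 1), ∑ i ∈ Finset.Icc (k + 1) n, q ^ (i - k)) * (1 - q) ^ 2
          + ((∑ k ∈ Finset.Icc 1 n, q ^ (n + 1 - k)) * (1 - q)) * (1 - q) := by
      ring
    rw [expand, ih, geomU q n]
    push_cast
    ring

theorem stmt_9 (p s r : ℕ) (hp : p.Prime) (hs : Odd s) (hs1 : 1 ≤ s)
    (hr : r = (s + 1) / 2) :
    2 * ((p : ℝ) - 1) * (p : ℝ) ^ (s - 1) *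
        ((r : ℝ) - ((p : ℝ) - 1) * hpr p r (fun i => 2 * ((i : ℤ) - 1))) =
      (1 / ((p : ℝ) + 1) ^ 2) *
        (((s : ℝ) + 1) * ((p : ℝ) ^ 2 - 1) * (p : ℝ) ^ s + 2 * ((p : ℝ) ^ (s + 1) - 1)) := by
  obtain ⟨t, rfl⟩ := hs
  have hrt : r = t + 1 := by omega
  subst hrt
  have hp2 : (2 : ℝ) ≤ (p : ℝ) := by exact_mod_cast hp.two_le
  have hp0 : (p : ℝ) ≠ 0 := by linarith
  have hH : hpr (p : ℝ) (t + 1) (fun i => 2 * ((i : ℤ) - 1))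
      = ∑ k ∈ Finset.Icc 1 (t + 1 - 1), ∑ i ∈ Finset.Icc (k + 1) (t + 1),
          (((p : ℝ) ^ 2)⁻¹) ^ (i - k) := by
    unfold hpr
    refine Finset.sum_congr rfl fun k hk => Finset.sum_congr rfl fun i hi => ?_
    simp only [Finset.mem_Icc] at hk hi
    have hki : k < i := by omega
    have e : 2 * ((k : ℤ) - 1) - 2 * ((i : ℤ) - 1) = -(((2 * (i - k) : ℕ)) : ℤ) := by
      push_cast [Nat.cast_sub hki.le]
      omega
    rw [e, zpow_neg, zpow_natCast, pow_mul, inv_pow]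
  have h1q : (1 : ℝ) - ((p : ℝ) ^ 2)⁻¹ ≠ 0 := by
    have h4 : (4 : ℝ) ≤ (p : ℝ) ^ 2 := by nlinarith
    have hinv : ((p : ℝ) ^ 2)⁻¹ ≤ 4⁻¹ := by
      apply inv_anti₀ <;> norm_num [h4]
    intro h
    rw [sub_eq_zero] at h
    rw [← h] at hinv
    norm_num at hinv
  have hval := hprH (((p : ℝ) ^ 2)⁻¹) (t + 1)
  have hX := (eq_div_iff (pow_ne_zero 2 h1q)).mpr hval
  rw [hH, hX]
  have hp1 : (p : ℝ) + 1 ≠ 0 := by linarith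
  have hm1 : (p : ℝ) - 1 ≠ 0 := by intro h; linarith
  have hne : (p : ℝ) ^ 2 - 1 ≠ 0 := by intro h; nlinarith
  have ex0 : 2 * t + 1 - 1 = 2 * t := by omega
  have hone : (1 : ℝ) - ((p : ℝ) ^ 2)⁻¹ = ((p : ℝ) ^ 2 - 1) / (p : ℝ) ^ 2 := by
    field_simp
  have hqpow : (((p : ℝ) ^ 2)⁻¹) ^ (t + 1 + 1) = ((p : ℝ) ^ (2 * t + 4))⁻¹ := by
    rw [inv_pow, ← pow_mul, show 2 * (t + 1 + 1) = 2 * t + 4 from by omega]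
  rw [ex0, hone, hqpow]
  push_cast
  field_simp
  ring
end

section
/- Let p be a prime and s an even positive integer, and let r = (s+2)/2. Then 2(p-1)p^{s-1}(r - (p-1)·h_{p,r}(0,2,4,...,s-2,s-1)) = (1/(p+1)^2)·(s(p^2-1)p^s + 2(2p^{s+1} - p^{s-1} + p^2 - p - 1)). -/
noncomputable def Saux (q : ℝ) (m : ℕ) : ℝ :=
  ∑ k ∈ Finset.Icc 1 m,
    ((∑ i ∈ Finset.Icc (k+1) m, (q⁻¹)^(2*(i-k))) + (q⁻¹)^(2*(m-k)+1))

lemma hpr_eq_Saux (q : ℝ) (m : ℕ) (c : ℤ) (hc : c = 2*(m:ℤ) - 1) :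
    hpr q (m+1) (fun i => if i = m+1 then c else 2*((i:ℤ)-1)) = Saux q m := by
  subst hc
  unfold hpr Saux
  beta_reduce
  rw [Nat.add_sub_cancel]
  refine Finset.sum_congr rfl fun k hk => ?_
  obtain ⟨hk1, hk2⟩ := Finset.mem_Icc.mp hk
  rw [Finset.sum_Icc_succ_top (by omega : k+1 ≤ m+1)]
  congr 1
  · refine Finset.sum_congr rfl fun i hi => ?_
    obtain ⟨hi1, hi2⟩ := Finset.mem_Icc.mp hi
    rw [if_neg (by omega), if_neg (by omega), inv_pow, ← zpow_natCast, ← zpow_neg]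
    congr 1
    omega
  · rw [if_neg (by omega), if_pos rfl, inv_pow, ← zpow_natCast, ← zpow_neg]
    congr 1
    omega

lemma Saux_succ (q : ℝ) (m : ℕ) :
    Saux q (m+1) = Saux q m +
      (∑ k ∈ Finset.Icc 1 m,
        ((q⁻¹)^(2*(m+1-k)) + (q⁻¹)^(2*(m+1-k)+1) - (q⁻¹)^(2*(m-k)+1))) + q⁻¹ := by
  unfold Saux
  rw [Finset.sum_Icc_succ_top (by omega : 1 ≤ m+1)]
  rw [show Finset.Icc (m+1+1) (m+1) = ∅ from Finset.Icc_eq_empty (by omega),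
    Finset.sum_empty, Nat.sub_self]
  have h : ∀ k ∈ Finset.Icc 1 m,
      (∑ i ∈ Finset.Icc (k+1) (m+1), (q⁻¹)^(2*(i-k))) + (q⁻¹)^(2*(m+1-k)+1) =
      ((∑ i ∈ Finset.Icc (k+1) m, (q⁻¹)^(2*(i-k))) + (q⁻¹)^(2*(m-k)+1)) +
      ((q⁻¹)^(2*(m+1-k)) + (q⁻¹)^(2*(m+1-k)+1) - (q⁻¹)^(2*(m-k)+1)) := by
    intro k hk
    obtain ⟨h1, h2⟩ := Finset.mem_Icc.mp hk
    rw [Finset.sum_Icc_succ_top (by omega : k+1 ≤ m+1)]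
    ring
  rw [Finset.sum_congr rfl h, Finset.sum_add_distrib]
  norm_num

lemma extra_sum (q : ℝ) (hq : q ≠ 0) (h2 : q^2 - 1 ≠ 0) (m : ℕ) :
    ∑ k ∈ Finset.Icc 1 m,
      ((q⁻¹)^(2*(m+1-k)) + (q⁻¹)^(2*(m+1-k)+1) - (q⁻¹)^(2*(m-k)+1))
      = (1 - (q⁻¹)^(2*m))/(q^2-1) + (q⁻¹)^(2*m+1) - q⁻¹ := by
  induction m with
  | zero => simp
  | succ n ih =>
    rw [Finset.sum_Icc_succ_top (by omega : 1 ≤ n+1)]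
    have hfac : ∀ k ∈ Finset.Icc 1 n,
        ((q⁻¹)^(2*(n+1+1-k)) + (q⁻¹)^(2*(n+1+1-k)+1) - (q⁻¹)^(2*(n+1-k)+1)) =
        q⁻¹^2 * ((q⁻¹)^(2*(n+1-k)) + (q⁻¹)^(2*(n+1-k)+1) - (q⁻¹)^(2*(n-k)+1)) := by
      intro k hk
      obtain ⟨h1, h2'⟩ := Finset.mem_Icc.mp hk
      rw [show 2*(n+1+1-k) = 2*(n-k)+4 from by omega,
          show 2*(n+1-k) = 2*(n-k)+2 from by omega]
      ring
    rw [Finset.sum_congr rfl hfac, ← Finset.mul_sum, ih,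
        show n+1+1-(n+1) = 1 from by omega, show n+1-(n+1) = 0 from by omega]
    simp only [inv_pow]
    field_simp
    ring

lemma Saux_closed (q : ℝ) (hq : q ≠ 0) (h2 : q^2 - 1 ≠ 0) (n : ℕ) :
    (q+1)^2*(q-1)^2 * Saux q (n+1) =
      (q+1)^2*(q-1)*((n:ℝ)+2) - ((n:ℝ)+1)*(q^2-1)*q - 2*q^2 + 1
        + (q+1-q^2)*(q⁻¹)^(2*n+1) := by
  induction n with
  | zero =>
    have h1 : Saux q 1 = q⁻¹ := by
      unfold Saux
      simp
    rw [h1]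
    simp only [inv_pow]
    field_simp
    ring
  | succ n ih =>
    rw [Saux_succ, extra_sum q hq h2]
    push_cast
    simp only [inv_pow] at ih ⊢
    rw [show 2*(n+1) = 2*n+2 from by omega, mul_add, mul_add, ih]
    field_simp
    ring

theorem stmt_10 (p s r : ℕ) (hp : p.Prime) (hs : Even s) (hs1 : 1 ≤ s)
    (hr : r = (s + 2) / 2) :
    2 * ((p : ℝ) - 1) * (p : ℝ) ^ (s - 1) *
        ((r : ℝ) - ((p : ℝ) - 1) *
          hpr p r (fun i => if i = r then (s : ℤ) - 1 else 2 * ((i : ℤ) - 1))) =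
      (1 / ((p : ℝ) + 1) ^ 2) *
        ((s : ℝ) * ((p : ℝ) ^ 2 - 1) * (p : ℝ) ^ s +
          2 * (2 * (p : ℝ) ^ (s + 1) - (p : ℝ) ^ (s - 1) + (p : ℝ) ^ 2 - (p : ℝ) - 1)) := by
  obtain ⟨m, hm⟩ := hs
  obtain ⟨n, rfl⟩ : ∃ n, s = 2*n + 2 := ⟨(s-2)/2, by omega⟩
  have hr2 : r = n + 1 + 1 := by omega
  subst hr2
  have hq2le : (2:ℝ) ≤ (p:ℝ) := by exact_mod_cast hp.two_le
  have h0 : (p:ℝ) ≠ 0 := by linarith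
  have h2 : (p:ℝ)^2 - 1 ≠ 0 := by nlinarith
  have hp1 : (p:ℝ) + 1 ≠ 0 := by linarith
  have hm1 : (p:ℝ) - 1 ≠ 0 := by linarith
  rw [hpr_eq_Saux (p:ℝ) (n+1) (((2*n+2 : ℕ) : ℤ) - 1) (by push_cast; ring)]
  rw [show 2*n+2-1 = 2*n+1 from by omega, show 2*n+2+1 = 2*n+3 from by omega]
  have hS := Saux_closed (p:ℝ) h0 h2 n
  have hden : ((p:ℝ)+1)^2*((p:ℝ)-1)^2 ≠ 0 := by positivity
  have hSv : Saux (p:ℝ) (n+1) =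
      (((p:ℝ)+1)^2*((p:ℝ)-1)*((n:ℝ)+2) - ((n:ℝ)+1)*((p:ℝ)^2-1)*(p:ℝ) - 2*(p:ℝ)^2 + 1
        + ((p:ℝ)+1-(p:ℝ)^2)*((p:ℝ)⁻¹)^(2*n+1)) / (((p:ℝ)+1)^2*((p:ℝ)-1)^2) := by
    rw [eq_div_iff hden]
    linear_combination hS
  rw [hSv]
  push_cast
  simp only [inv_pow]
  field_simp
  ring
end

section
/- For odd s ≥ 1 and any prime p, the quantity (1/(p+1)^2)((s+1)(p^2-1)p^s + 2(p^{s+1}-1)) equals 2(p-1)((m+1)p^{2m} - (p-1)Σ_{j=0}^{m-1}(j+1)p^{2j}), where s = 2m+1. In particular, this quantity is an integer divisible by 2(p-1). -/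
lemma aux_sum (x : ℝ) (m : ℕ) :
    (x ^ 2 - 1) ^ 2 * ∑ j ∈ Finset.range m, ((j : ℝ) + 1) * x ^ (2 * j)
      = (m : ℝ) * x ^ (2 * m + 2) - ((m : ℝ) + 1) * x ^ (2 * m) + 1 := by
  induction m with
  | zero => simp
  | succ n ih =>
    rw [Finset.sum_range_succ, mul_add, ih]
    push_cast
    ring

theorem stmt_11 (p s m : ℕ) (hp : p.Prime) (hs : s = 2 * m + 1) :
    (1 / ((p : ℝ) + 1) ^ 2) *
        (((s : ℝ) + 1) * ((p : ℝ) ^ 2 - 1) * (p : ℝ) ^ s + 2 * ((p : ℝ) ^ (s + 1) - 1)) =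
      2 * ((p : ℝ) - 1) * (((m : ℝ) + 1) * (p : ℝ) ^ (2 * m) -
        ((p : ℝ) - 1) * ∑ j ∈ Finset.range m, ((j : ℝ) + 1) * (p : ℝ) ^ (2 * j)) ∧
    ∃ E : ℤ, (E : ℝ) =
        (1 / ((p : ℝ) + 1) ^ 2) *
          (((s : ℝ) + 1) * ((p : ℝ) ^ 2 - 1) * (p : ℝ) ^ s + 2 * ((p : ℝ) ^ (s + 1) - 1)) ∧
      2 * ((p : ℤ) - 1) ∣ E := by
  subst hs
  have hx : ((p : ℝ) + 1) ≠ 0 := by positivity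
  have key : (1 / ((p : ℝ) + 1) ^ 2) *
        (((2 * m + 1 : ℕ) : ℝ) + 1) * ((p : ℝ) ^ 2 - 1) * (p : ℝ) ^ (2 * m + 1)
      = (1 / ((p : ℝ) + 1) ^ 2) *
        (((2 * m + 1 : ℕ) : ℝ) + 1) * ((p : ℝ) ^ 2 - 1) * (p : ℝ) ^ (2 * m + 1) := rfl
  have h1 : (1 / ((p : ℝ) + 1) ^ 2) *
        ((((2 * m + 1 : ℕ) : ℝ) + 1) * ((p : ℝ) ^ 2 - 1) * (p : ℝ) ^ (2 * m + 1)
          + 2 * ((p : ℝ) ^ (2 * m + 1 + 1) - 1)) =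
      2 * ((p : ℝ) - 1) * (((m : ℝ) + 1) * (p : ℝ) ^ (2 * m) -
        ((p : ℝ) - 1) * ∑ j ∈ Finset.range m, ((j : ℝ) + 1) * (p : ℝ) ^ (2 * j)) := by
    rw [div_mul_eq_mul_div, div_eq_iff (pow_ne_zero 2 hx)]
    push_cast
    linear_combination 2 * aux_sum (p : ℝ) m
  refine ⟨h1, 2 * ((p : ℤ) - 1) * (((m : ℤ) + 1) * (p : ℤ) ^ (2 * m) -
      ((p : ℤ) - 1) * ∑ j ∈ Finset.range m, ((j : ℤ) + 1) * (p : ℤ) ^ (2 * j)), ?_, ?_⟩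
  · rw [h1]; push_cast; ring
  · exact Dvd.intro _ rfl
end

section
/- For even s = 2m ≥ 2 and any prime p, the quantity (1/(p+1)^2)(s(p^2-1)p^s + 2(2p^{s+1} - p^{s-1} + p^2 - p - 1)) equals 2(p-1)(m p^{2m-1} - (p-1)Σ_{j=0}^{m-3}(j+1)p^{2j+3} + 1). In particular, this quantity is an integer divisible by 2(p-1). -/
lemma aux12 (x : ℝ) (n : ℕ) :
    (2 * (n : ℝ) + 4) * (x ^ 2 - 1) * x ^ (2 * n + 4) +
      2 * (2 * x ^ (2 * n + 5) - x ^ (2 * n + 3) + x ^ 2 - x - 1) =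
    (x + 1) ^ 2 * (2 * (x - 1) * (((n : ℝ) + 2) * x ^ (2 * n + 3) -
      (x - 1) * (∑ j ∈ Finset.range n, ((j : ℝ) + 1) * x ^ (2 * j + 3)) + 1)) := by
  induction n with
  | zero => simp; ring
  | succ n ih =>
    rw [Finset.sum_range_succ]
    push_cast
    linear_combination ih

theorem stmt_12 (p s m : ℕ) (hp : p.Prime) (hm : 1 ≤ m) (hs : s = 2 * m) :
    (1 / ((p : ℝ) + 1) ^ 2) *
        ((s : ℝ) * ((p : ℝ) ^ 2 - 1) * (p : ℝ) ^ s +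
          2 * (2 * (p : ℝ) ^ (s + 1) - (p : ℝ) ^ (s - 1) + (p : ℝ) ^ 2 - (p : ℝ) - 1)) =
      2 * ((p : ℝ) - 1) * ((m : ℝ) * (p : ℝ) ^ (2 * m - 1) -
        ((p : ℝ) - 1) * (∑ j ∈ Finset.range (m - 2), ((j : ℝ) + 1) * (p : ℝ) ^ (2 * j + 3)) + 1) ∧
    ∃ E : ℤ, (E : ℝ) =
        (1 / ((p : ℝ) + 1) ^ 2) *
          ((s : ℝ) * ((p : ℝ) ^ 2 - 1) * (p : ℝ) ^ s +
            2 * (2 * (p : ℝ) ^ (s + 1) - (p : ℝ) ^ (s - 1) + (p : ℝ) ^ 2 - (p : ℝ) - 1)) ∧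
      2 * ((p : ℤ) - 1) ∣ E := by
  have hp1 : ((p : ℝ) + 1) ≠ 0 := by positivity
  have hp2 : ((p : ℝ) + 1) ^ 2 ≠ 0 := pow_ne_zero _ hp1
  have key : (1 / ((p : ℝ) + 1) ^ 2) *
        ((s : ℝ) * ((p : ℝ) ^ 2 - 1) * (p : ℝ) ^ s +
          2 * (2 * (p : ℝ) ^ (s + 1) - (p : ℝ) ^ (s - 1) + (p : ℝ) ^ 2 - (p : ℝ) - 1)) =
      2 * ((p : ℝ) - 1) * ((m : ℝ) * (p : ℝ) ^ (2 * m - 1) -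
        ((p : ℝ) - 1) * (∑ j ∈ Finset.range (m - 2), ((j : ℝ) + 1) * (p : ℝ) ^ (2 * j + 3)) + 1) := by
    rw [one_div, inv_mul_eq_div, div_eq_iff hp2]
    rcases Nat.exists_eq_add_of_le hm with ⟨k, hk⟩
    rcases k with _ | n
    · -- m = 1
      subst hs; simp only [hk]
      norm_num
      ring
    · -- m = n + 2
      have hm2 : m = n + 2 := by omega
      subst hs; subst hm2
      have e1 : 2 * (n + 2) = 2 * n + 4 := by ring
      have e2 : 2 * n + 4 - 1 = 2 * n + 3 := by omega
      have e3 : 2 * (n + 2) + 1 = 2 * n + 5 := by ring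
      have e4 : n + 2 - 2 = n := by omega
      rw [e1, e2, e4]
      push_cast
      linear_combination aux12 (p : ℝ) n
  refine ⟨key, ⟨2 * ((p : ℤ) - 1) * ((m : ℤ) * (p : ℤ) ^ (2 * m - 1) -
    ((p : ℤ) - 1) * (∑ j ∈ Finset.range (m - 2), ((j : ℤ) + 1) * (p : ℤ) ^ (2 * j + 3)) + 1),
    ?_, ⟨_, rfl⟩⟩⟩
  rw [key]
  push_cast
  ring
end

section
/- For s odd and p = 2: the energy values associated to a = (0, 2, 4, ..., s-3, s-1) (of length (s+1)/2) and to b = (0, 1, 3, 5, ..., s-2, s-1) (of length (s+3)/2) coincide; that is, 2·2^{s-1}·((s+1)/2 - h_{2,(s+1)/2}(a)) = 2·2^{s-1}·((s+3)/2 - h_{2,(s+3)/2}(b)). -/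
lemma two_zpow_neg (n : ℕ) : (2:ℝ) ^ (-(n:ℤ)) = (1/2:ℝ)^n := by
  rw [zpow_neg, zpow_natCast, one_div, inv_pow]

lemma geo (n : ℕ) : ∑ t ∈ Finset.range n, (1/4:ℝ)^t = (1 - (1/4)^n) * (4/3) := by
  rw [geom_sum_eq (by norm_num)]; ring

lemma key1 (j : ℕ) : (2:ℝ) ^ (-(2:ℤ) - 2*j) = (1/4:ℝ) * (1/4)^j := by
  rw [show (-(2:ℤ) - 2*j) = -((2 + 2*j : ℕ) : ℤ) by push_cast; ring, two_zpow_neg,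
    pow_add, pow_mul]
  norm_num

lemma key2 (j : ℕ) : (2:ℝ) ^ (-(1:ℤ) - 2*j) = (1/2:ℝ) * (1/4)^j := by
  rw [show (-(1:ℤ) - 2*j) = -((1 + 2*j : ℕ) : ℤ) by push_cast; ring, two_zpow_neg,
    pow_add, pow_mul]
  norm_num

lemma sum_lin (c d : ℝ) (m : ℕ) :
    ∑ j ∈ Finset.range m, (c + d * (1/4:ℝ)^j) = m*c + d*((1-(1/4:ℝ)^m)*(4/3)) := by
  rw [Finset.sum_add_distrib, Finset.sum_const, ← Finset.mul_sum, geo, nsmul_eq_mul,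
    Finset.card_range]

lemma h1_eq (m : ℕ) :
    hpr 2 (m+1) (fun i => 2 * ((i : ℤ) - 1)) = m/3 - (1 - (1/4:ℝ)^m)/9 := by
  unfold hpr
  rw [Nat.add_sub_cancel]
  have step : ∀ k ∈ Finset.Icc 1 m,
      (∑ i ∈ Finset.Icc (k+1) (m+1), (2:ℝ)^((2*((k:ℤ)-1)) - 2*((i:ℤ)-1)))
        = (1 - (1/4:ℝ)^(m+1-k))/3 := by
    intro k hk
    simp only [Finset.mem_Icc] at hk
    rw [← Finset.Ico_add_one_right_eq_Icc, Finset.sum_Ico_eq_sum_range,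
      show m + 1 + 1 - (k+1) = m + 1 - k by omega]
    have e : ∀ j ∈ Finset.range (m+1-k),
        (2:ℝ)^((2*((k:ℤ)-1)) - 2*(((k+1+j:ℕ):ℤ)-1)) = (1/4:ℝ) * (1/4)^j := by
      intro j _
      rw [show (2*((k:ℤ)-1)) - 2*(((k+1+j:ℕ):ℤ)-1) = -(2:ℤ) - 2*j by push_cast; ring]
      exact key1 j
    rw [Finset.sum_congr rfl e, ← Finset.mul_sum, geo]
    ring
  rw [Finset.sum_congr rfl step, ← Finset.Ico_add_one_right_eq_Icc, Finset.sum_Ico_eq_sum_range,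
    show m + 1 - 1 = m from rfl]
  have e2 : ∀ j ∈ Finset.range m,
      (1 - (1/4:ℝ)^(m+1-(1+j)))/3 = (fun t => (1 - (1/4:ℝ)^(t+1))/3) (m - 1 - j) := by
    intro j hj
    simp only [Finset.mem_range] at hj
    simp only []
    rw [show m - 1 - j + 1 = m + 1 - (1 + j) by omega]
  rw [Finset.sum_congr rfl e2,
    Finset.sum_range_reflect (fun t => (1 - (1/4:ℝ)^(t+1))/3) m]
  have e3 : ∀ j ∈ Finset.range m,
      (fun t => (1 - (1/4:ℝ)^(t+1))/3) j = (1/3) + (-1/12) * (1/4:ℝ)^j := by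
    intro j _
    simp only []
    rw [pow_succ]
    ring
  rw [Finset.sum_congr rfl e3, sum_lin]
  ring


lemma h2_eq (m : ℕ) :
    hpr 2 (m+2) (fun i => if i = 1 then 0 else if i = m + 2 then 2 * (m:ℤ)
      else 2 * (i:ℤ) - 3)
      = m/3 + (1/4:ℝ)^m + (8/9) * (1 - (1/4:ℝ)^m) := by
  unfold hpr
  simp only []
  rw [show m + 2 - 1 = m + 1 from rfl]
  rw [show Finset.Icc 1 (m+1) = insert 1 (Finset.Icc 2 (m+1)) by
    ext x; simp only [Finset.mem_Icc, Finset.mem_insert]; omega]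
  rw [Finset.sum_insert (by simp)]
  -- k = 1 part
  have hA : (∑ i ∈ Finset.Icc (1+1) (m+2),
      (2:ℝ) ^ ((if (1:ℕ) = 1 then 0 else if (1:ℕ) = m + 2 then 2 * (m:ℤ) else 2 * ((1:ℕ):ℤ) - 3)
        - (if i = 1 then 0 else if i = m + 2 then 2 * (m:ℤ) else 2 * (i:ℤ) - 3)))
      = (2/3) * (1 - (1/4:ℝ)^m) + (1/4:ℝ)^m := by
    rw [Finset.sum_Icc_succ_top (by omega)]
    have et : ((if (1:ℕ) = 1 then 0 else if (1:ℕ) = m + 2 then 2 * (m:ℤ) else 2 * ((1:ℕ):ℤ) - 3)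
        - (if m + 1 + 1 = 1 then 0 else if m + 1 + 1 = m + 2 then 2 * (m:ℤ)
            else 2 * ((m+1+1 : ℕ):ℤ) - 3))
        = -((2*m : ℕ) : ℤ) := by
      rw [if_pos rfl, if_neg (by omega : ¬ m + 1 + 1 = 1), if_pos (rfl : m + 1 + 1 = m + 2)]
      push_cast; ring
    have e1 : ∀ i ∈ Finset.Icc (1+1) (m+1),
        (2:ℝ) ^ ((if (1:ℕ) = 1 then 0 else if (1:ℕ) = m + 2 then 2 * (m:ℤ) else 2 * ((1:ℕ):ℤ) - 3)
          - (if i = 1 then 0 else if i = m + 2 then 2 * (m:ℤ) else 2 * (i:ℤ) - 3))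
        = (2:ℝ) ^ ((0:ℤ) - (2 * (i:ℤ) - 3)) := by
      intro i hi
      simp only [Finset.mem_Icc] at hi
      rw [if_pos rfl, if_neg (by omega : ¬ i = 1), if_neg (by omega : ¬ i = m + 2)]
    rw [Finset.sum_congr rfl e1, et, two_zpow_neg, pow_mul,
      ← Finset.Ico_add_one_right_eq_Icc, Finset.sum_Ico_eq_sum_range,
      show m + 1 + 1 - (1 + 1) = m from rfl]
    have e2 : ∀ j ∈ Finset.range m,
        (2:ℝ) ^ ((0:ℤ) - (2 * ((1+1+j : ℕ):ℤ) - 3)) = (1/2:ℝ) * (1/4)^j := by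
      intro j _
      rw [show (0:ℤ) - (2 * ((1+1+j : ℕ):ℤ) - 3) = -(1:ℤ) - 2*j by push_cast; ring]
      exact key2 j
    rw [Finset.sum_congr rfl e2, ← Finset.mul_sum, geo]
    norm_num
    ring
  rw [hA]
  -- k in Icc 2 (m+1) part
  have step : ∀ k ∈ Finset.Icc 2 (m+1),
      (∑ i ∈ Finset.Icc (k+1) (m+2),
        (2:ℝ) ^ ((if k = 1 then 0 else if k = m + 2 then 2 * (m:ℤ) else 2 * (k:ℤ) - 3)
          - (if i = 1 then 0 else if i = m + 2 then 2 * (m:ℤ) else 2 * (i:ℤ) - 3)))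
      = (1 - (1/4:ℝ)^(m+1-k))/3 + (1/2:ℝ)^(2*m+3-2*k) := by
    intro k hk
    simp only [Finset.mem_Icc] at hk
    rw [Finset.sum_Icc_succ_top (by omega)]
    have et : ((if k = 1 then 0 else if k = m + 2 then 2 * (m:ℤ) else 2 * (k:ℤ) - 3)
        - (if m + 1 + 1 = 1 then 0 else if m + 1 + 1 = m + 2 then 2 * (m:ℤ)
            else 2 * ((m+1+1 : ℕ):ℤ) - 3))
        = -((2*m+3-2*k : ℕ) : ℤ) := by
      rw [if_neg (by omega : ¬ k = 1), if_neg (by omega : ¬ k = m + 2),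
        if_neg (by omega : ¬ m + 1 + 1 = 1), if_pos (rfl : m + 1 + 1 = m + 2)]
      have : ((2*m+3-2*k : ℕ) : ℤ) = 2*(m:ℤ)+3-2*(k:ℤ) := by
        push_cast [Nat.cast_sub (by omega : 2*k ≤ 2*m+3)]; ring
      rw [this]; ring
    have e1 : ∀ i ∈ Finset.Icc (k+1) (m+1),
        (2:ℝ) ^ ((if k = 1 then 0 else if k = m + 2 then 2 * (m:ℤ) else 2 * (k:ℤ) - 3)
          - (if i = 1 then 0 else if i = m + 2 then 2 * (m:ℤ) else 2 * (i:ℤ) - 3))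
        = (2:ℝ) ^ ((2 * (k:ℤ) - 3) - (2 * (i:ℤ) - 3)) := by
      intro i hi
      simp only [Finset.mem_Icc] at hi
      rw [if_neg (by omega : ¬ k = 1), if_neg (by omega : ¬ k = m + 2),
        if_neg (by omega : ¬ i = 1), if_neg (by omega : ¬ i = m + 2)]
    rw [Finset.sum_congr rfl e1, et, two_zpow_neg,
      ← Finset.Ico_add_one_right_eq_Icc, Finset.sum_Ico_eq_sum_range,
      show m + 1 + 1 - (k + 1) = m + 1 - k by omega]
    have e2 : ∀ j ∈ Finset.range (m+1-k),
        (2:ℝ) ^ ((2 * (k:ℤ) - 3) - (2 * ((k+1+j : ℕ):ℤ) - 3)) = (1/4:ℝ) * (1/4)^j := by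
      intro j _
      rw [show (2 * (k:ℤ) - 3) - (2 * ((k+1+j : ℕ):ℤ) - 3) = -(2:ℤ) - 2*j by push_cast; ring]
      exact key1 j
    rw [Finset.sum_congr rfl e2, ← Finset.mul_sum, geo]
    ring
  rw [Finset.sum_congr rfl step, ← Finset.Ico_add_one_right_eq_Icc, Finset.sum_Ico_eq_sum_range,
    show m + 1 + 1 - 2 = m from rfl]
  have e2 : ∀ j ∈ Finset.range m,
      ((1 - (1/4:ℝ)^(m+1-(2+j)))/3 + (1/2:ℝ)^(2*m+3-2*(2+j)))
      = (fun t => (1 - (1/4:ℝ)^t)/3 + (1/2:ℝ)^(2*t+1)) (m - 1 - j) := by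
    intro j hj
    simp only [Finset.mem_range] at hj
    simp only []
    rw [show m - 1 - j = m + 1 - (2+j) by omega,
      show 2*(m+1-(2+j))+1 = 2*m+3-2*(2+j) by omega]
  rw [Finset.sum_congr rfl e2,
    Finset.sum_range_reflect (fun t => (1 - (1/4:ℝ)^t)/3 + (1/2:ℝ)^(2*t+1)) m]
  have e3 : ∀ j ∈ Finset.range m,
      (fun t => (1 - (1/4:ℝ)^t)/3 + (1/2:ℝ)^(2*t+1)) j = (1/3) + (1/6) * (1/4:ℝ)^j := by
    intro j _
    simp only []
    rw [pow_succ, pow_mul]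
    norm_num
    ring
  rw [Finset.sum_congr rfl e3, sum_lin]
  ring

theorem stmt_14 (s : ℕ) (hs : Odd s) (hs3 : 3 ≤ s) :
    2 * (2 : ℝ) ^ (s - 1) *
        ((((s : ℝ) + 1) / 2) - hpr 2 ((s + 1) / 2) (fun i => 2 * ((i : ℤ) - 1))) =
      2 * (2 : ℝ) ^ (s - 1) *
        ((((s : ℝ) + 3) / 2) - hpr 2 ((s + 3) / 2)
          (fun i => if i = 1 then 0 else if i = (s + 3) / 2 then (s : ℤ) - 1
            else 2 * (i : ℤ) - 3)) := by
  obtain ⟨m, hm⟩ : ∃ m, s = 2 * m + 1 := by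
    obtain ⟨t, ht⟩ := hs; exact ⟨t, by omega⟩
  have e1 : (s + 1) / 2 = m + 1 := by omega
  have e2 : (s + 3) / 2 = m + 2 := by omega
  have e3 : (s : ℤ) - 1 = 2 * (m : ℤ) := by
    have : (s : ℤ) = 2 * m + 1 := by exact_mod_cast congrArg (Nat.cast : ℕ → ℤ) hm
    omega
  have e4 : (s : ℝ) = 2 * m + 1 := by rw [hm]; push_cast; ring
  rw [e1, e2, e3, e4, h1_eq m, h2_eq m]
  congr 1
  ring
end
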